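/- arXiv:2102.03527 — 7 statements merged into one kernel-verified Lean document; each statement's English description precedes it below -/
import Mathlib

section
/- Let A22 be an invertible n_y×n_y real matrix, A21 an n_y×n_x matrix, A11 an n_x×n_x matrix, and A12 an n_x×n_y matrix. For every M > ‖A22⁻¹A21‖ there exists δ > 0 such that for all ε ∈ (0, δ] the map T(C) = −A22⁻¹A21 + ε A22⁻¹ C A11 + ε A22⁻¹ C A12 C maps the closed ball {C ∈ ℝ^{n_y×n_x} : ‖C‖ ≤ M} into itself and is a contraction there; hence there is a unique C* with ‖C*‖ ≤ M satisfying C* = −A22⁻¹A21 + ε A22⁻¹ C* A11 + ε A22⁻¹ C* A12 C*. -/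
/-- The fixed-point map `T(C) = -A22⁻¹A21 + ε A22⁻¹ C A11 + ε A22⁻¹ C A12 C`. -/
noncomputable def Tmap {nx ny : ℕ}
    (A11 : EuclideanSpace ℝ (Fin nx) →L[ℝ] EuclideanSpace ℝ (Fin nx))
    (A12 : EuclideanSpace ℝ (Fin ny) →L[ℝ] EuclideanSpace ℝ (Fin nx))
    (A21 : EuclideanSpace ℝ (Fin nx) →L[ℝ] EuclideanSpace ℝ (Fin ny))
    (A22inv : EuclideanSpace ℝ (Fin ny) →L[ℝ] EuclideanSpace ℝ (Fin ny))
    (ε : ℝ) (C : EuclideanSpace ℝ (Fin nx) →L[ℝ] EuclideanSpace ℝ (Fin ny)) :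
    EuclideanSpace ℝ (Fin nx) →L[ℝ] EuclideanSpace ℝ (Fin ny) :=
  -(A22inv.comp A21) + ε • (A22inv.comp (C.comp A11))
    + ε • (A22inv.comp ((C.comp A12).comp C))

set_option maxHeartbeats 1000000 in
theorem stmt_0 (nx ny : ℕ)
    (A11 : EuclideanSpace ℝ (Fin nx) →L[ℝ] EuclideanSpace ℝ (Fin nx))
    (A12 : EuclideanSpace ℝ (Fin ny) →L[ℝ] EuclideanSpace ℝ (Fin nx))
    (A21 : EuclideanSpace ℝ (Fin nx) →L[ℝ] EuclideanSpace ℝ (Fin ny))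
    (A22 A22inv : EuclideanSpace ℝ (Fin ny) →L[ℝ] EuclideanSpace ℝ (Fin ny))
    (hinv1 : A22inv.comp A22 = ContinuousLinearMap.id ℝ _)
    (hinv2 : A22.comp A22inv = ContinuousLinearMap.id ℝ _)
    (M : ℝ) (hM : ‖A22inv.comp A21‖ < M) :
    ∃ δ > 0, ∀ ε ∈ Set.Ioc (0 : ℝ) δ,
      (∀ C : EuclideanSpace ℝ (Fin nx) →L[ℝ] EuclideanSpace ℝ (Fin ny),
        ‖C‖ ≤ M → ‖Tmap A11 A12 A21 A22inv ε C‖ ≤ M) ∧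
      (∃ L, 0 ≤ L ∧ L < 1 ∧
        ∀ C C' : EuclideanSpace ℝ (Fin nx) →L[ℝ] EuclideanSpace ℝ (Fin ny),
          ‖C‖ ≤ M → ‖C'‖ ≤ M →
          ‖Tmap A11 A12 A21 A22inv ε C - Tmap A11 A12 A21 A22inv ε C'‖ ≤ L * ‖C - C'‖) ∧
      (∃! Cstar : EuclideanSpace ℝ (Fin nx) →L[ℝ] EuclideanSpace ℝ (Fin ny),
        ‖Cstar‖ ≤ M ∧ Cstar = Tmap A11 A12 A21 A22inv ε Cstar) := by
  have ha0 : (0:ℝ) ≤ ‖A22inv.comp A21‖ := norm_nonneg _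
  have hM0 : 0 < M := lt_of_le_of_lt ha0 hM
  set a := ‖A22inv.comp A21‖ with ha
  set N := ‖A22inv‖ * (‖A11‖ + ‖A12‖) with hN
  have hB : (0:ℝ) ≤ ‖A22inv‖ := norm_nonneg _
  have h11 : (0:ℝ) ≤ ‖A11‖ := norm_nonneg _
  have h12 : (0:ℝ) ≤ ‖A12‖ := norm_nonneg _
  have hN0 : 0 ≤ N := by positivity
  have hd1 : (0:ℝ) < 1 + N*(M+M^2) := by positivity
  have hd2 : (0:ℝ) < 2*(1+N*(1+2*M)) := by positivity
  refine ⟨min ((M - a)/(1 + N*(M+M^2))) (1/(2*(1+N*(1+2*M)))),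
    lt_min (div_pos (sub_pos.2 hM) hd1) (div_pos one_pos hd2), ?_⟩
  rintro ε ⟨hε0, hεδ⟩
  have hε1 : ε * (1 + N*(M+M^2)) ≤ M - a := by
    have := (le_min_iff.1 hεδ).1
    calc ε * (1 + N*(M+M^2)) ≤ ((M - a)/(1 + N*(M+M^2))) * (1 + N*(M+M^2)) := by
          apply mul_le_mul_of_nonneg_right this hd1.le
      _ = M - a := by field_simp
  have hε2 : ε * (1 + N*(1+2*M)) ≤ 1/2 := by
    have := (le_min_iff.1 hεδ).2
    have h3 : (0:ℝ) < 1 + N*(1+2*M) := by positivity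
    calc ε * (1 + N*(1+2*M)) ≤ (1/(2*(1+N*(1+2*M)))) * (1 + N*(1+2*M)) := by
          apply mul_le_mul_of_nonneg_right this h3.le
      _ = 1/2 := by field_simp
  have normT : ∀ C : EuclideanSpace ℝ (Fin nx) →L[ℝ] EuclideanSpace ℝ (Fin ny), ‖C‖ ≤ M →
      ‖Tmap A11 A12 A21 A22inv ε C‖ ≤ M := by
    intro C hC
    have hC0 : (0:ℝ) ≤ ‖C‖ := norm_nonneg _
    have t1 : ‖ε • (A22inv.comp (C.comp A11))‖ ≤ ε * (‖A22inv‖ * (‖C‖ * ‖A11‖)) := by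
      rw [norm_smul ε (A22inv.comp (C.comp A11)), Real.norm_eq_abs, abs_of_pos hε0]
      exact mul_le_mul_of_nonneg_left
        (le_trans (ContinuousLinearMap.opNorm_comp_le _ _)
          (mul_le_mul_of_nonneg_left (ContinuousLinearMap.opNorm_comp_le _ _) hB)) hε0.le
    have t2 : ‖ε • (A22inv.comp ((C.comp A12).comp C))‖ ≤ ε * (‖A22inv‖ * (‖C‖ * ‖A12‖ * ‖C‖)) := by
      rw [norm_smul ε (A22inv.comp ((C.comp A12).comp C)), Real.norm_eq_abs, abs_of_pos hε0]
      refine mul_le_mul_of_nonneg_left ?_ hε0.le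
      refine le_trans (ContinuousLinearMap.opNorm_comp_le _ _) ?_
      refine mul_le_mul_of_nonneg_left ?_ hB
      exact le_trans (ContinuousLinearMap.opNorm_comp_le _ _)
        (mul_le_mul_of_nonneg_right (ContinuousLinearMap.opNorm_comp_le _ _) hC0)
    have h1 := norm_add_le (-(A22inv.comp A21) + ε • (A22inv.comp (C.comp A11)))
        (ε • (A22inv.comp ((C.comp A12).comp C)))
    have h2 := norm_add_le (-(A22inv.comp A21)) (ε • (A22inv.comp (C.comp A11)))
    rw [norm_neg] at h2
    have key : ‖Tmap A11 A12 A21 A22inv ε C‖ ≤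
        a + ε * (‖A22inv‖ * (‖C‖ * ‖A11‖)) + ε * (‖A22inv‖ * (‖C‖ * ‖A12‖ * ‖C‖)) := by
      unfold Tmap
      refine le_trans h1 ?_
      have := add_le_add (le_trans h2 (add_le_add_right t1 _)) t2
      linarith
    have hNb : ε * (‖A22inv‖ * (‖C‖ * ‖A11‖)) + ε * (‖A22inv‖ * (‖C‖ * ‖A12‖ * ‖C‖))
        ≤ ε * (N * (M + M^2)) := by
      rw [hN]
      have hC2 : ‖C‖ * ‖C‖ ≤ M * M := mul_le_mul hC hC hC0 hM0.le
      nlinarith [mul_le_mul_of_nonneg_left hC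
          (by positivity : (0:ℝ) ≤ ε * (‖A22inv‖ * ‖A11‖)),
        mul_le_mul_of_nonneg_left hC2
          (by positivity : (0:ℝ) ≤ ε * (‖A22inv‖ * ‖A12‖)),
        mul_nonneg (mul_nonneg hε0.le hB) (mul_nonneg h11 (mul_nonneg hM0.le hM0.le)),
        mul_nonneg (mul_nonneg hε0.le hB) (mul_nonneg h12 hM0.le)]
    nlinarith
  have hlip : ∀ C C' : EuclideanSpace ℝ (Fin nx) →L[ℝ] EuclideanSpace ℝ (Fin ny),
      ‖C‖ ≤ M → ‖C'‖ ≤ M →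
      ‖Tmap A11 A12 A21 A22inv ε C - Tmap A11 A12 A21 A22inv ε C'‖
        ≤ (ε * (N * (1 + 2*M))) * ‖C - C'‖ := by
    intro C C' hC hC'
    have hdiff : Tmap A11 A12 A21 A22inv ε C - Tmap A11 A12 A21 A22inv ε C'
        = ε • (A22inv.comp ((C - C').comp A11))
          + ε • (A22inv.comp (((C - C').comp A12).comp C))
          + ε • (A22inv.comp ((C'.comp A12).comp (C - C'))) := by
      have qlin : A22inv.comp ((C - C').comp A11)
          = A22inv.comp (C.comp A11) - A22inv.comp (C'.comp A11) := by
        rw [ContinuousLinearMap.sub_comp, ContinuousLinearMap.comp_sub]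
      have q : A22inv.comp (((C - C').comp A12).comp C)
            + A22inv.comp ((C'.comp A12).comp (C - C'))
          = A22inv.comp ((C.comp A12).comp C) - A22inv.comp ((C'.comp A12).comp C') := by
        rw [ContinuousLinearMap.sub_comp, ContinuousLinearMap.sub_comp,
          ContinuousLinearMap.comp_sub, ContinuousLinearMap.comp_sub,
          ContinuousLinearMap.comp_sub]
        abel
      have key : ε • (A22inv.comp (((C - C').comp A12).comp C))
            + ε • (A22inv.comp ((C'.comp A12).comp (C - C')))
          = ε • (A22inv.comp ((C.comp A12).comp C))
            - ε • (A22inv.comp ((C'.comp A12).comp C')) := by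
        calc ε • (A22inv.comp (((C - C').comp A12).comp C))
              + ε • (A22inv.comp ((C'.comp A12).comp (C - C')))
            = ε • (A22inv.comp (((C - C').comp A12).comp C)
                + A22inv.comp ((C'.comp A12).comp (C - C'))) :=
              (smul_add ε (A22inv.comp (((C - C').comp A12).comp C))
                (A22inv.comp ((C'.comp A12).comp (C - C')))).symm
          _ = ε • (A22inv.comp ((C.comp A12).comp C)
                - A22inv.comp ((C'.comp A12).comp C')) := by rw [q]
          _ = _ := smul_sub ε (A22inv.comp ((C.comp A12).comp C))
                (A22inv.comp ((C'.comp A12).comp C'))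
      calc Tmap A11 A12 A21 A22inv ε C - Tmap A11 A12 A21 A22inv ε C'
          = (ε • (A22inv.comp (C.comp A11)) - ε • (A22inv.comp (C'.comp A11)))
            + (ε • (A22inv.comp ((C.comp A12).comp C))
              - ε • (A22inv.comp ((C'.comp A12).comp C'))) := by
            unfold Tmap; abel
        _ = ε • (A22inv.comp ((C - C').comp A11))
            + (ε • (A22inv.comp (((C - C').comp A12).comp C))
              + ε • (A22inv.comp ((C'.comp A12).comp (C - C')))) := by
            rw [key, qlin, smul_sub]
        _ = _ := by abel
    rw [hdiff]
    set D := ‖C - C'‖ with hD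
    have hD0 : (0:ℝ) ≤ D := norm_nonneg _
    have t1 : ‖ε • (A22inv.comp ((C - C').comp A11))‖ ≤ ε * (‖A22inv‖ * (D * ‖A11‖)) := by
      rw [norm_smul ε (A22inv.comp ((C - C').comp A11)), Real.norm_eq_abs, abs_of_pos hε0]
      exact mul_le_mul_of_nonneg_left
        (le_trans (ContinuousLinearMap.opNorm_comp_le _ _)
          (mul_le_mul_of_nonneg_left (ContinuousLinearMap.opNorm_comp_le _ _) hB)) hε0.le
    have t2 : ‖ε • (A22inv.comp (((C - C').comp A12).comp C))‖
        ≤ ε * (‖A22inv‖ * (D * ‖A12‖ * ‖C‖)) := by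
      rw [norm_smul ε (A22inv.comp (((C - C').comp A12).comp C)), Real.norm_eq_abs, abs_of_pos hε0]
      refine mul_le_mul_of_nonneg_left ?_ hε0.le
      refine le_trans (ContinuousLinearMap.opNorm_comp_le _ _) ?_
      refine mul_le_mul_of_nonneg_left ?_ hB
      exact le_trans (ContinuousLinearMap.opNorm_comp_le _ _)
        (mul_le_mul_of_nonneg_right (ContinuousLinearMap.opNorm_comp_le _ _) (norm_nonneg _))
    have t3 : ‖ε • (A22inv.comp ((C'.comp A12).comp (C - C')))‖
        ≤ ε * (‖A22inv‖ * (‖C'‖ * ‖A12‖ * D)) := by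
      rw [norm_smul ε (A22inv.comp ((C'.comp A12).comp (C - C'))), Real.norm_eq_abs, abs_of_pos hε0]
      refine mul_le_mul_of_nonneg_left ?_ hε0.le
      refine le_trans (ContinuousLinearMap.opNorm_comp_le _ _) ?_
      refine mul_le_mul_of_nonneg_left ?_ hB
      exact le_trans (ContinuousLinearMap.opNorm_comp_le _ _)
        (mul_le_mul_of_nonneg_right (ContinuousLinearMap.opNorm_comp_le _ _) hD0)
    have hsum := le_trans (norm_add_le _ _)
      (add_le_add (le_trans (norm_add_le _ _) (add_le_add t1 t2)) t3)
    refine le_trans hsum ?_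
    have hC0 : (0:ℝ) ≤ ‖C‖ := norm_nonneg _
    have hC'0 : (0:ℝ) ≤ ‖C'‖ := norm_nonneg _
    rw [hN]
    have p1 : (0:ℝ) ≤ ε * (‖A22inv‖ * (‖A12‖ * D)) :=
      mul_nonneg hε0.le (mul_nonneg hB (mul_nonneg h12 hD0))
    have p2 : (0:ℝ) ≤ ε * (‖A22inv‖ * (‖A11‖ * (M * D))) :=
      mul_nonneg hε0.le (mul_nonneg hB (mul_nonneg h11 (mul_nonneg hM0.le hD0)))
    have p3 : (0:ℝ) ≤ ε * (‖A22inv‖ * (‖A12‖ * D)) := p1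
    nlinarith [mul_le_mul_of_nonneg_left hC p1, mul_le_mul_of_nonneg_left hC' p1, p2, p3]
  set L := ε * (N * (1 + 2*M)) with hLdef
  have hL0 : 0 ≤ L := by positivity
  have hL1 : L < 1 := by rw [hLdef]; nlinarith
  refine ⟨normT, ⟨L, hL0, hL1, hlip⟩, ?_⟩
  set s : Set (EuclideanSpace ℝ (Fin nx) →L[ℝ] EuclideanSpace ℝ (Fin ny)) :=
    Metric.closedBall 0 M with hs
  have hmem : ∀ C, C ∈ s ↔ ‖C‖ ≤ M := by
    intro C; rw [hs, Metric.mem_closedBall, dist_zero_right]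
  have hsc : IsComplete s := Metric.isClosed_closedBall.isComplete
  have hsf : Set.MapsTo (Tmap A11 A12 A21 A22inv ε) s s := by
    intro C hC; rw [hmem] at *; exact normT C hC
  have hcontr : ContractingWith L.toNNReal (hsf.restrict _ s s) := by
    constructor
    · have hcast : (L.toNNReal : ℝ) < 1 := by
        rw [Real.coe_toNNReal L hL0]; exact hL1
      exact_mod_cast hcast
    · apply LipschitzWith.of_dist_le_mul
      rintro ⟨C, hC⟩ ⟨C', hC'⟩
      rw [Subtype.dist_eq, Subtype.dist_eq, dist_eq_norm, dist_eq_norm,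
        Real.coe_toNNReal L hL0]
      simp only [Set.MapsTo.val_restrict_apply]
      exact hlip C C' ((hmem C).1 hC) ((hmem C').1 hC')
  have h0s : (0 : EuclideanSpace ℝ (Fin nx) →L[ℝ] EuclideanSpace ℝ (Fin ny)) ∈ s := by
    rw [hmem]; simpa using hM0.le
  obtain ⟨y, hys, hy, -, -⟩ := hcontr.exists_fixedPoint' hsc hsf h0s (edist_ne_top _ _)
  refine ⟨y, ⟨(hmem y).1 hys, hy.symm⟩, ?_⟩
  rintro z ⟨hz, hzfix⟩
  have hle := hlip z y hz ((hmem y).1 hys)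
  rw [← hzfix, hy.eq] at hle
  by_contra hne
  have hpos : 0 < ‖z - y‖ := by
    rw [norm_pos_iff, sub_ne_zero]; exact hne
  nlinarith [mul_pos (sub_pos.2 hL1) hpos]
end

section
/- With the notation of the previous result, the unique fixed point C* = C*(ε) satisfies ‖C* + A22⁻¹A21‖ ≤ ε M₁ (M + M²) for all ε ∈ (0, δ]; in particular C*(ε) → −A22⁻¹A21 as ε → 0 with error O(ε). -/
set_option maxHeartbeats 1000000


/-- Any fixed point `C*` with `‖C*‖ ≤ M` satisfies
`‖C* + A22⁻¹A21‖ ≤ ε M₁ (M + M²)`, i.e. `C*(ε) → -A22⁻¹A21` with error `O(ε)`. -/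
theorem stmt_1 (nx ny : ℕ)
    (A11 : EuclideanSpace ℝ (Fin nx) →L[ℝ] EuclideanSpace ℝ (Fin nx))
    (A12 : EuclideanSpace ℝ (Fin ny) →L[ℝ] EuclideanSpace ℝ (Fin nx))
    (A21 : EuclideanSpace ℝ (Fin nx) →L[ℝ] EuclideanSpace ℝ (Fin ny))
    (A22 A22inv : EuclideanSpace ℝ (Fin ny) →L[ℝ] EuclideanSpace ℝ (Fin ny))
    (hinv1 : A22inv.comp A22 = ContinuousLinearMap.id ℝ _)
    (hinv2 : A22.comp A22inv = ContinuousLinearMap.id ℝ _)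
    (M M₁ : ℝ) (hM : ‖A22inv.comp A21‖ < M)
    (hM1 : M₁ = ‖A22inv‖ * (‖A11‖ + ‖A12‖)) :
    ∀ ε : ℝ, 0 < ε →
      ∀ Cstar : EuclideanSpace ℝ (Fin nx) →L[ℝ] EuclideanSpace ℝ (Fin ny),
        ‖Cstar‖ ≤ M → Cstar = Tmap A11 A12 A21 A22inv ε Cstar →
        ‖Cstar + A22inv.comp A21‖ ≤ ε * M₁ * (M + M ^ 2) := by
  intro ε hε Cstar hC hfix
  have hM0 : 0 ≤ M := le_trans (norm_nonneg _) hM.le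
  have hCs : 0 ≤ ‖Cstar‖ := norm_nonneg _
  have heq : Cstar + A22inv.comp A21
      = ε • (A22inv.comp (Cstar.comp A11))
        + ε • (A22inv.comp ((Cstar.comp A12).comp Cstar)) := by
    nth_rewrite 1 [hfix]; unfold Tmap; abel
  rw [heq]
  have key : ∀ (B : EuclideanSpace ℝ (Fin nx) →L[ℝ] EuclideanSpace ℝ (Fin ny)),
      ‖ε • (A22inv.comp B)‖ ≤ ε * (‖A22inv‖ * ‖B‖) := by
    intro B
    refine le_trans (ContinuousLinearMap.opNorm_smul_le _ _) ?_
    rw [Real.norm_of_nonneg hε.le]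
    gcongr
    exact ContinuousLinearMap.opNorm_comp_le _ _
  have h1 : ‖ε • (A22inv.comp (Cstar.comp A11))‖ ≤ ε * (‖A22inv‖ * (M * ‖A11‖)) := by
    refine le_trans (key _) ?_
    gcongr
    exact le_trans (ContinuousLinearMap.opNorm_comp_le _ _) (by gcongr)
  have h2 : ‖ε • (A22inv.comp ((Cstar.comp A12).comp Cstar))‖
      ≤ ε * (‖A22inv‖ * (M * ‖A12‖ * M)) := by
    refine le_trans (key _) ?_
    gcongr
    refine le_trans (ContinuousLinearMap.opNorm_comp_le _ _) ?_
    gcongr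
    exact le_trans (ContinuousLinearMap.opNorm_comp_le _ _) (by gcongr)
  refine le_trans (norm_add_le _ _) (le_trans (add_le_add h1 h2) ?_)
  rw [hM1]
  have hA11 : (0:ℝ) ≤ ‖A11‖ := norm_nonneg _
  have hA12 : (0:ℝ) ≤ ‖A12‖ := norm_nonneg _
  have hAi : (0:ℝ) ≤ ‖A22inv‖ := norm_nonneg _
  have hεAi : (0:ℝ) ≤ ε * ‖A22inv‖ := mul_nonneg hε.le hAi
  nlinarith [mul_nonneg hεAi (mul_nonneg hA11 (mul_nonneg hM0 hM0)),
    mul_nonneg hεAi (mul_nonneg hA12 hM0)]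
end

section
/- Suppose ξ : ℝⁿ → ℝ and η : ℝⁿ → ℝⁿ are sufficiently smooth, η ∈ W^{k,∞}, and ∇²ξ ∈ W^{k,∞}. Then ‖ξ(· + η(·)h) − ξ(·) − h ∇ξ(·)η(·)‖_{k,∞} = O(h²) as h → 0, where the W^{k,∞} norm is taken in the spatial variable. -/
open scoped ContDiff
set_option maxHeartbeats 1000000

section AuxST

lemma my_abs_mem_uIcc {a t : ℝ} (h : a ∈ Set.uIcc 0 t) : |a| ≤ |t| := by
  rw [Set.mem_uIcc] at h
  rcases h with ⟨h1, h2⟩ | ⟨h1, h2⟩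
  · rw [abs_of_nonneg h1]; exact le_trans h2 (le_abs_self t)
  · rw [abs_of_nonpos h2]; exact le_trans (neg_le_neg h1) (neg_le_abs t)

variable {P : Type} [NormedAddCommGroup P] [NormedSpace ℝ P]

lemma my_fderiv_shift {V : Type*} [NormedAddCommGroup V] [NormedSpace ℝ V]
    (f : P → V) (hf : Differentiable ℝ f) (c x : P) :
    fderiv ℝ (fun q => f (q + c)) x = fderiv ℝ f (x + c) := by
  have h1 : HasFDerivAt (fun q : P => q + c) (ContinuousLinearMap.id ℝ P) x :=
    (hasFDerivAt_id x).add_const c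
  have h2 := (hf (x + c)).hasFDerivAt.comp x h1
  simpa [Function.comp_def] using h2.fderiv

lemma my_iteratedFDeriv_shift {V : Type*} [NormedAddCommGroup V] [NormedSpace ℝ V]
    (f : P → V) (hf : ContDiff ℝ ∞ f) (c : P) :
    ∀ (r : ℕ) (x : P),
      iteratedFDeriv ℝ r (fun q => f (q + c)) x = iteratedFDeriv ℝ r f (x + c) := by
  intro r
  induction r with
  | zero => intro x; ext m; simp
  | succ r IH =>
    intro x
    ext m
    rw [iteratedFDeriv_succ_apply_left, iteratedFDeriv_succ_apply_left]
    have hfun : iteratedFDeriv ℝ r (fun q => f (q + c))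
        = fun q => iteratedFDeriv ℝ r f (q + c) := funext fun q => IH q
    have hdiff : Differentiable ℝ (iteratedFDeriv ℝ r f) := by
      have : ContDiff ℝ 1 (iteratedFDeriv ℝ r f) :=
        hf.iteratedFDeriv_right (by exact_mod_cast le_top)
      exact this.differentiable one_ne_zero
    rw [hfun, my_fderiv_shift _ hdiff c x]

lemma my_swap (e : P) :
    ∀ (r : ℕ) {V : Type} [NormedAddCommGroup V] [NormedSpace ℝ V] (G : P → V),
      ContDiff ℝ ∞ G → ∀ (p : P) (M : Fin r → P),
      iteratedFDeriv ℝ (r + 1) G p (Fin.cons e M) =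
        iteratedFDeriv ℝ r (fun q => fderiv ℝ G q e) p M := by
  intro r
  induction r with
  | zero =>
    intro V _ _ G hG p M
    simp [iteratedFDeriv_one_apply]
  | succ r IH =>
    intro V _ _ G hG p M
    have hdG : ContDiff ℝ ∞ (fderiv ℝ G) :=
      hG.fderiv_right (le_of_eq (by rfl))
    have h1 : Fin.init (α := fun _ : Fin (r + 2) => P) (Fin.cons e M) = Fin.cons e (Fin.init M) := by
      funext i
      induction i using Fin.cases with
      | zero => simp [Fin.init]
      | succ j => simp [Fin.init, ← Fin.succ_castSucc]
    have h2 : Fin.cons (α := fun _ : Fin (r + 2) => P) e M (Fin.last (r + 1)) = M (Fin.last r) := by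
      have : Fin.last (r + 1) = (Fin.last r).succ := by simp [Fin.succ_last]
      rw [this, Fin.cons_succ]
    rw [iteratedFDeriv_succ_apply_right, h1, h2, IH (fderiv ℝ G) hdG p]
    have key : (fun q => fderiv ℝ (fderiv ℝ G) q e)
        = fderiv ℝ (fun q => fderiv ℝ G q e) := by
      funext q
      have hd2 : DifferentiableAt ℝ (fderiv ℝ G) q :=
        (hdG.differentiable (by simp)).differentiableAt
      have hL : HasFDerivAt (fun z => fderiv ℝ G z e)
          ((ContinuousLinearMap.apply ℝ V e).comp (fderiv ℝ (fderiv ℝ G) q)) q :=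
        ((ContinuousLinearMap.apply ℝ V e).hasFDerivAt).comp q hd2.hasFDerivAt
      rw [hL.fderiv]
      ext w
      simp only [ContinuousLinearMap.coe_comp', Function.comp_apply,
        ContinuousLinearMap.apply_apply]
      exact second_derivative_symmetric
        (fun y => ((hG.differentiable (by simp)) y).hasFDerivAt)
        (hd2.hasFDerivAt) e w
    rw [key, ← iteratedFDeriv_succ_apply_right]

end AuxST

section Aux2

variable {E : Type} [NormedAddCommGroup E] [NormedSpace ℝ E]
  {V : Type} [NormedAddCommGroup V] [NormedSpace ℝ V]

lemma my_slice (G : ℝ × E → V) (hG : ContDiff ℝ ∞ G) (j : ℕ) (s : ℝ) (x : E) :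
    iteratedFDeriv ℝ j (fun x' => G (s, x')) x =
      (iteratedFDeriv ℝ j G (s, x)).compContinuousLinearMap
        (fun _ => ContinuousLinearMap.inr ℝ ℝ E) := by
  have hco : (fun x' => G (s, x')) =
      (fun q => G (q + ((s : ℝ), (0 : E)))) ∘ (ContinuousLinearMap.inr ℝ ℝ E) := by
    funext x'
    simp [Function.comp, Prod.mk_add_mk]
  rw [hco]
  have hsh : ContDiff ℝ ∞ (fun q : ℝ × E => G (q + ((s : ℝ), (0 : E)))) :=
    hG.comp (contDiff_id.add contDiff_const)
  rw [ContinuousLinearMap.iteratedFDeriv_comp_right _ hsh x (by exact_mod_cast le_top)]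
  rw [my_iteratedFDeriv_shift G hG _ j _]
  congr 2
  simp [Prod.mk_add_mk]

lemma my_curve (G : ℝ × E → V) (hG : ContDiff ℝ ∞ G) (j : ℕ) (x : E)
    (M : Fin j → ℝ × E) (s : ℝ) :
    HasDerivAt (fun t => iteratedFDeriv ℝ j G (t, x) M)
      (iteratedFDeriv ℝ j (fun q => fderiv ℝ G q ((1 : ℝ), (0 : E))) (s, x) M) s := by
  have hg : ContDiff ℝ ∞ (iteratedFDeriv ℝ j G) :=
    hG.iteratedFDeriv_right (by exact_mod_cast le_top)
  have hc : HasDerivAt (fun t : ℝ => ((t, x) : ℝ × E)) ((1 : ℝ), (0 : E)) s :=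
    HasDerivAt.prodMk (hasDerivAt_id s) (hasDerivAt_const s x)
  have hgd : HasFDerivAt (iteratedFDeriv ℝ j G)
      (fderiv ℝ (iteratedFDeriv ℝ j G) (s, x)) (s, x) :=
    ((hg.differentiable (by simp)) _).hasFDerivAt
  have h1 : HasDerivAt (fun t => iteratedFDeriv ℝ j G (t, x))
      (fderiv ℝ (iteratedFDeriv ℝ j G) (s, x) ((1 : ℝ), (0 : E))) s :=
    hgd.comp_hasDerivAt s hc
  have h2 := (ContinuousMultilinearMap.apply ℝ (fun _ : Fin j => ℝ × E) V
    M).hasFDerivAt.comp_hasDerivAt s h1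
  have h3 : (ContinuousMultilinearMap.apply ℝ (fun _ : Fin j => ℝ × E) V M)
      (fderiv ℝ (iteratedFDeriv ℝ j G) (s, x) ((1 : ℝ), (0 : E)))
      = iteratedFDeriv ℝ j (fun q => fderiv ℝ G q ((1 : ℝ), (0 : E))) (s, x) M := by
    rw [← my_swap _ j G hG (s, x) M, iteratedFDeriv_succ_apply_left]
    simp
  rw [h3] at h2
  exact h2

end Aux2

lemma my_clm_iFD_bound {P V : Type*} [NormedAddCommGroup P] [NormedSpace ℝ P]
    [NormedAddCommGroup V] [NormedSpace ℝ V] (c : P →L[ℝ] V) (i : ℕ) (hi : 1 ≤ i) (p : P) :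
    ‖iteratedFDeriv ℝ i (⇑c) p‖ ≤ ‖c‖ := by
  obtain ⟨m, rfl⟩ : ∃ m, i = m + 1 := ⟨i - 1, by omega⟩
  rw [← norm_iteratedFDeriv_fderiv]
  have hc : fderiv ℝ (⇑c) = fun _ => c := funext fun y => c.fderiv
  rw [hc]
  match m with
  | 0 => rw [norm_iteratedFDeriv_zero]
  | Nat.succ m' =>
      rw [iteratedFDeriv_const_of_ne (by omega)]
      simpa using norm_nonneg c

lemma my_choose_sum (i : ℕ) (x y : ℕ → ℝ) (Ma Mb : ℝ)
    (hx : ∀ l, l ≤ i → x l ≤ Ma) (hy : ∀ l, l ≤ i → y l ≤ Mb)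
    (hx0 : ∀ l, 0 ≤ x l) (hy0 : ∀ l, 0 ≤ y l) (hMb : 0 ≤ Mb) :
    ∑ l ∈ Finset.range (i + 1), (i.choose l : ℝ) * x l * y (i - l) ≤ 2 ^ i * Ma * Mb := by
  have hMa : 0 ≤ Ma := le_trans (hx0 0) (hx 0 (by omega))
  have h1 : ∀ l ∈ Finset.range (i + 1),
      (i.choose l : ℝ) * x l * y (i - l) ≤ (i.choose l : ℝ) * Ma * Mb := by
    intro l hl
    rw [Finset.mem_range] at hl
    have h2 : x l ≤ Ma := hx l (by omega)
    have h3 : y (i - l) ≤ Mb := hy (i - l) (by omega)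
    have h4 : (i.choose l : ℝ) * x l ≤ (i.choose l : ℝ) * Ma :=
      mul_le_mul_of_nonneg_left h2 (by positivity)
    exact mul_le_mul h4 h3 (hy0 _) (by positivity)
  calc ∑ l ∈ Finset.range (i + 1), (i.choose l : ℝ) * x l * y (i - l)
      ≤ ∑ l ∈ Finset.range (i + 1), (i.choose l : ℝ) * Ma * Mb := Finset.sum_le_sum h1
    _ = (∑ l ∈ Finset.range (i + 1), (i.choose l : ℝ)) * Ma * Mb := by
        rw [← Finset.sum_mul, ← Finset.sum_mul]
    _ = 2 ^ i * Ma * Mb := by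
        have hcs : (∑ l ∈ Finset.range (i + 1), (i.choose l : ℝ)) = (2 : ℝ) ^ i := by
          rw [← Nat.cast_sum, Nat.sum_range_choose]
          push_cast
          ring
        rw [hcs]

/-- Forward-difference Taylor estimate: if `η ∈ W^{k,∞}` and `∇²ξ ∈ W^{k,∞}`, then
`‖ξ(· + η(·)h) - ξ(·) - h ∇ξ(·)η(·)‖_{k,∞} = O(h²)` as `h → 0`. -/
theorem stmt_7 (n k : ℕ)
    (ξ : EuclideanSpace ℝ (Fin n) → ℝ)
    (η : EuclideanSpace ℝ (Fin n) → EuclideanSpace ℝ (Fin n))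
    (hξ : ContDiff ℝ (⊤ : ℕ∞) ξ) (hη : ContDiff ℝ (⊤ : ℕ∞) η)
    (hηb : ∀ j ≤ k, ∃ B, ∀ x, ‖iteratedFDeriv ℝ j η x‖ ≤ B)
    (hξb : ∀ j, 2 ≤ j → j ≤ k + 2 → ∃ B, ∀ x, ‖iteratedFDeriv ℝ j ξ x‖ ≤ B) :
    ∃ C, ∃ h₀ > 0, ∀ h : ℝ, |h| ≤ h₀ → ∀ j ≤ k, ∀ x,
      ‖iteratedFDeriv ℝ j
        (fun x' => ξ (x' + h • η x') - ξ x' - h * fderiv ℝ ξ x' (η x')) x‖ ≤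
      C * h ^ 2 := by
  classical
  have hξ' : ContDiff ℝ ∞ ξ := hξ.of_le (by simp)
  have hη' : ContDiff ℝ ∞ η := hη.of_le (by simp)
  have hinf1 : (∞ + 1 : WithTop ℕ∞) ≤ ∞ := le_of_eq (by rfl)
  have hdξ : ContDiff ℝ ∞ (fderiv ℝ ξ) := hξ'.fderiv_right hinf1
  have hd2ξ : ContDiff ℝ ∞ (fderiv ℝ (fderiv ℝ ξ)) := hdξ.fderiv_right hinf1
  set A : ℝ × EuclideanSpace ℝ (Fin n) → EuclideanSpace ℝ (Fin n) := fun p => p.2 + p.1 • η p.2 with hA_def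
  have hA : ContDiff ℝ ∞ A :=
    contDiff_snd.add (contDiff_fst.smul (hη'.comp contDiff_snd))
  set F : ℝ × EuclideanSpace ℝ (Fin n) → ℝ := fun p => ξ (A p) - ξ p.2 - p.1 * (fderiv ℝ ξ p.2) (η p.2) with hF_def
  have hF : ContDiff ℝ ∞ F :=
    ((hξ'.comp hA).sub (hξ'.comp contDiff_snd)).sub
      (contDiff_fst.mul (((hdξ.comp contDiff_snd)).clm_apply (hη'.comp contDiff_snd)))
  set χ : ℝ × EuclideanSpace ℝ (Fin n) → ℝ := fun p => (fderiv ℝ ξ (A p)) (η p.2) - (fderiv ℝ ξ p.2) (η p.2) with hχ_def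
  have hχ : ContDiff ℝ ∞ χ :=
    ((hdξ.comp hA).clm_apply (hη'.comp contDiff_snd)).sub
      ((hdξ.comp contDiff_snd).clm_apply (hη'.comp contDiff_snd))
  set W : ℝ × EuclideanSpace ℝ (Fin n) → ℝ := fun p => ((fderiv ℝ (fderiv ℝ ξ) (A p)) (η p.2)) (η p.2) with hW_def
  have hWc : ContDiff ℝ ∞ W :=
    (((hd2ξ.comp hA).clm_apply (hη'.comp contDiff_snd))).clm_apply (hη'.comp contDiff_snd)
  have hcast : ((1 : ℕ) : WithTop ℕ∞) ≤ ∞ := by exact_mod_cast le_top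
  have hdiffξ : Differentiable ℝ ξ := hξ'.differentiable (by simp)
  have hdiffη : Differentiable ℝ η := hη'.differentiable (by simp)
  have hdiffdξ : Differentiable ℝ (fderiv ℝ ξ) := hdξ.differentiable (by simp)
  have hdiffd2ξ : Differentiable ℝ (fderiv ℝ (fderiv ℝ ξ)) := hd2ξ.differentiable (by simp)
  have hA' : ∀ q : ℝ × EuclideanSpace ℝ (Fin n), HasFDerivAt A
      (ContinuousLinearMap.snd ℝ ℝ _ +
        (q.1 • ((fderiv ℝ η q.2).comp (ContinuousLinearMap.snd ℝ ℝ _)) +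
          (ContinuousLinearMap.fst ℝ ℝ _).smulRight (η q.2))) q := by
    intro q
    have h1 : HasFDerivAt (fun p : ℝ × EuclideanSpace ℝ (Fin n) => η p.2)
        ((fderiv ℝ η q.2).comp (ContinuousLinearMap.snd ℝ ℝ _)) q :=
      ((hdiffη q.2).hasFDerivAt).comp q hasFDerivAt_snd
    exact hasFDerivAt_snd.add ((hasFDerivAt_fst).smul h1)
  have hη2 : ∀ q : ℝ × EuclideanSpace ℝ (Fin n),
      HasFDerivAt (fun p : ℝ × EuclideanSpace ℝ (Fin n) => η p.2)
        ((fderiv ℝ η q.2).comp (ContinuousLinearMap.snd ℝ ℝ _)) q := fun q =>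
    ((hdiffη q.2).hasFDerivAt).comp q hasFDerivAt_snd
  have hψ : ∀ q : ℝ × EuclideanSpace ℝ (Fin n),
      HasFDerivAt (fun p : ℝ × EuclideanSpace ℝ (Fin n) => (fderiv ℝ ξ p.2) (η p.2))
      (((fderiv ℝ ξ q.2).comp ((fderiv ℝ η q.2).comp (ContinuousLinearMap.snd ℝ ℝ _))) +
        (((fderiv ℝ (fderiv ℝ ξ) q.2).comp (ContinuousLinearMap.snd ℝ ℝ _)).flip (η q.2))) q := by
    intro q
    have hc : HasFDerivAt (fun p : ℝ × EuclideanSpace ℝ (Fin n) => fderiv ℝ ξ p.2)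
        ((fderiv ℝ (fderiv ℝ ξ) q.2).comp (ContinuousLinearMap.snd ℝ ℝ _)) q :=
      ((hdiffdξ q.2).hasFDerivAt).comp q hasFDerivAt_snd
    exact hc.clm_apply (hη2 q)
  -- identity 1 : the p.1-partial derivative of F is χ
  have hFe : (fun q => fderiv ℝ F q ((1 : ℝ), (0 : EuclideanSpace ℝ (Fin n)))) = χ := by
    funext q
    have h1 : HasFDerivAt (fun p => ξ (A p))
        ((fderiv ℝ ξ (A q)).comp (ContinuousLinearMap.snd ℝ ℝ _ +
          (q.1 • ((fderiv ℝ η q.2).comp (ContinuousLinearMap.snd ℝ ℝ _)) +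
            (ContinuousLinearMap.fst ℝ ℝ _).smulRight (η q.2)))) q :=
      ((hdiffξ (A q)).hasFDerivAt).comp q (hA' q)
    have h2 : HasFDerivAt (fun p : ℝ × EuclideanSpace ℝ (Fin n) => ξ p.2)
        ((fderiv ℝ ξ q.2).comp (ContinuousLinearMap.snd ℝ ℝ _)) q :=
      ((hdiffξ q.2).hasFDerivAt).comp q hasFDerivAt_snd
    have h3 : HasFDerivAt (fun p : ℝ × EuclideanSpace ℝ (Fin n) =>
        p.1 * (fderiv ℝ ξ p.2) (η p.2))
        (q.1 • (((fderiv ℝ ξ q.2).comp ((fderiv ℝ η q.2).comp (ContinuousLinearMap.snd ℝ ℝ _))) +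
          (((fderiv ℝ (fderiv ℝ ξ) q.2).comp (ContinuousLinearMap.snd ℝ ℝ _)).flip (η q.2))) +
          ((fderiv ℝ ξ q.2) (η q.2)) • (ContinuousLinearMap.fst ℝ ℝ _)) q :=
      hasFDerivAt_fst.mul (hψ q)
    have hFd : HasFDerivAt F _ q := (h1.sub h2).sub h3
    rw [hFd.fderiv]
    simp [hχ_def]
  -- identity 2 : the p.1-partial derivative of χ is W
  have hχe : (fun q => fderiv ℝ χ q ((1 : ℝ), (0 : EuclideanSpace ℝ (Fin n)))) = W := by
    funext q
    have hc : HasFDerivAt (fun p : ℝ × EuclideanSpace ℝ (Fin n) => fderiv ℝ ξ (A p))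
        ((fderiv ℝ (fderiv ℝ ξ) (A q)).comp (ContinuousLinearMap.snd ℝ ℝ _ +
          (q.1 • ((fderiv ℝ η q.2).comp (ContinuousLinearMap.snd ℝ ℝ _)) +
            (ContinuousLinearMap.fst ℝ ℝ _).smulRight (η q.2)))) q :=
      ((hdiffdξ (A q)).hasFDerivAt).comp q (hA' q)
    have h1 : HasFDerivAt (fun p : ℝ × EuclideanSpace ℝ (Fin n) =>
        (fderiv ℝ ξ (A p)) (η p.2))
        ((fderiv ℝ ξ (A q)).comp ((fderiv ℝ η q.2).comp (ContinuousLinearMap.snd ℝ ℝ _)) +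
          ((fderiv ℝ (fderiv ℝ ξ) (A q)).comp (ContinuousLinearMap.snd ℝ ℝ _ +
            (q.1 • ((fderiv ℝ η q.2).comp (ContinuousLinearMap.snd ℝ ℝ _)) +
              (ContinuousLinearMap.fst ℝ ℝ _).smulRight (η q.2)))).flip (η q.2)) q :=
      hc.clm_apply (hη2 q)
    have hχd : HasFDerivAt χ _ q := h1.sub (hψ q)
    rw [hχd.fderiv]
    simp [hW_def]
  -- uniform bounds on η and on high derivatives of ξ
  obtain ⟨Mη, hMη1, hMη⟩ : ∃ M : ℝ, 1 ≤ M ∧ ∀ i ≤ k, ∀ y, ‖iteratedFDeriv ℝ i η y‖ ≤ M := by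
    choose B hB using hηb
    refine ⟨1 + ∑ i ∈ Finset.range (k + 1), |if hi : i ≤ k then B i hi else 0|, ?_, ?_⟩
    · have hnn : (0:ℝ) ≤ ∑ i ∈ Finset.range (k + 1), |if hi : i ≤ k then B i hi else 0| :=
        Finset.sum_nonneg fun _ _ => abs_nonneg _
      linarith
    · intro i hi y
      have h1 : ‖iteratedFDeriv ℝ i η y‖ ≤ if hi' : i ≤ k then B i hi' else 0 := by
        rw [dif_pos hi]; exact hB i hi y
      have h2 : (if hi' : i ≤ k then B i hi' else 0) ≤
          |if hi' : i ≤ k then B i hi' else 0| := le_abs_self _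
      have h3 : |if hi' : i ≤ k then B i hi' else 0| ≤
          ∑ l ∈ Finset.range (k + 1), |if hl : l ≤ k then B l hl else 0| :=
        Finset.single_le_sum (f := fun l => |if hl : l ≤ k then B l hl else 0|)
          (fun l _ => abs_nonneg _) (Finset.mem_range.mpr (by omega))
      linarith
  obtain ⟨Mξ2, hMξ1, hMξ⟩ : ∃ M : ℝ, 1 ≤ M ∧ ∀ i, 2 ≤ i → i ≤ k + 2 → ∀ y,
      ‖iteratedFDeriv ℝ i ξ y‖ ≤ M := by
    choose B hB using hξb
    refine ⟨1 + ∑ i ∈ Finset.range (k + 3),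
      |if hi : 2 ≤ i ∧ i ≤ k + 2 then B i hi.1 hi.2 else 0|, ?_, ?_⟩
    · have hnn : (0:ℝ) ≤ ∑ i ∈ Finset.range (k + 3),
          |if hi : 2 ≤ i ∧ i ≤ k + 2 then B i hi.1 hi.2 else 0| :=
        Finset.sum_nonneg fun _ _ => abs_nonneg _
      linarith
    · intro i h2i hik y
      have h1 : ‖iteratedFDeriv ℝ i ξ y‖ ≤
          if hi' : 2 ≤ i ∧ i ≤ k + 2 then B i hi'.1 hi'.2 else 0 := by
        rw [dif_pos ⟨h2i, hik⟩]; exact hB i h2i hik y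
      have h2 : (if hi' : 2 ≤ i ∧ i ≤ k + 2 then B i hi'.1 hi'.2 else 0) ≤
          |if hi' : 2 ≤ i ∧ i ≤ k + 2 then B i hi'.1 hi'.2 else 0| := le_abs_self _
      have h3 : |if hi' : 2 ≤ i ∧ i ≤ k + 2 then B i hi'.1 hi'.2 else 0| ≤
          ∑ l ∈ Finset.range (k + 3), |if hl : 2 ≤ l ∧ l ≤ k + 2 then B l hl.1 hl.2 else 0| :=
        Finset.single_le_sum (f := fun l => |if hl : 2 ≤ l ∧ l ≤ k + 2 then B l hl.1 hl.2 else 0|)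
          (fun l _ => abs_nonneg _) (Finset.mem_range.mpr (by omega))
      linarith
  have h0Mη : (0:ℝ) ≤ Mη := by linarith
  have h0Mξ : (0:ℝ) ≤ Mξ2 := by linarith
  have hΓ : ∀ i ≤ k, ∀ y, ‖iteratedFDeriv ℝ i (fderiv ℝ (fderiv ℝ ξ)) y‖ ≤ Mξ2 := by
    intro i hi y
    rw [norm_iteratedFDeriv_fderiv, norm_iteratedFDeriv_fderiv]
    exact hMξ (i + 1 + 1) (by omega) (by omega) y
  have hcastle : ∀ i : ℕ, ((i : ℕ∞) : WithTop ℕ∞) ≤ ∞ := fun i => by exact_mod_cast le_top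
  have hηsb : ∀ i ≤ k, ∀ p : ℝ × EuclideanSpace ℝ (Fin n),
      ‖iteratedFDeriv ℝ i (fun p : ℝ × EuclideanSpace ℝ (Fin n) => η p.2) p‖ ≤ Mη := by
    intro i hi p
    have hcomp : (fun p : ℝ × EuclideanSpace ℝ (Fin n) => η p.2)
        = η ∘ (ContinuousLinearMap.snd ℝ ℝ (EuclideanSpace ℝ (Fin n))) := rfl
    rw [hcomp, ContinuousLinearMap.iteratedFDeriv_comp_right _ hη' p (by exact_mod_cast le_top)]
    refine le_trans (ContinuousMultilinearMap.norm_compContinuousLinearMap_le _ _) ?_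
    have hp1 : (∏ _i : Fin i, ‖ContinuousLinearMap.snd ℝ ℝ (EuclideanSpace ℝ (Fin n))‖) ≤ 1 :=
      Finset.prod_le_one (fun _ _ => norm_nonneg _)
        (fun _ _ => by apply ContinuousLinearMap.norm_snd_le)
    calc ‖iteratedFDeriv ℝ i η _‖ * ∏ _i : Fin i, ‖ContinuousLinearMap.snd ℝ ℝ
          (EuclideanSpace ℝ (Fin n))‖
        ≤ Mη * 1 := mul_le_mul (hMη i hi _) hp1
          (Finset.prod_nonneg fun _ _ => norm_nonneg _) h0Mη
      _ = Mη := mul_one _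
  have hfstb : ∀ (i : ℕ) (p : ℝ × EuclideanSpace ℝ (Fin n)), |p.1| ≤ 1 →
      ‖iteratedFDeriv ℝ i (fun p : ℝ × EuclideanSpace ℝ (Fin n) => p.1) p‖ ≤ 1 := by
    intro i p hp
    match i with
    | 0 => rw [norm_iteratedFDeriv_zero]; simpa using hp
    | Nat.succ m =>
      have hcoe : (fun p : ℝ × EuclideanSpace ℝ (Fin n) => p.1)
          = ⇑(ContinuousLinearMap.fst ℝ ℝ (EuclideanSpace ℝ (Fin n))) := rfl
      rw [hcoe]
      exact le_trans (my_clm_iFD_bound _ _ (by omega) p)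
        (by apply ContinuousLinearMap.norm_fst_le)
  set D : ℝ := 1 + 2 ^ k * Mη with hD_def
  have hD1 : (1:ℝ) ≤ D := by
    have : (0:ℝ) ≤ 2 ^ k * Mη := by positivity
    rw [hD_def]; linarith
  have h0D : (0:ℝ) ≤ D := by linarith
  have hAb : ∀ i, 1 ≤ i → i ≤ k → ∀ p : ℝ × EuclideanSpace ℝ (Fin n), |p.1| ≤ 1 →
      ‖iteratedFDeriv ℝ i A p‖ ≤ D ^ i := by
    intro i h1i hik p hp
    have hsm : ContDiff ℝ ∞ (fun p : ℝ × EuclideanSpace ℝ (Fin n) => p.1 • η p.2) :=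
      contDiff_fst.smul (hη'.comp contDiff_snd)
    have hsplit : iteratedFDeriv ℝ i A p =
        iteratedFDeriv ℝ i (fun p : ℝ × EuclideanSpace ℝ (Fin n) => p.2) p +
        iteratedFDeriv ℝ i (fun p : ℝ × EuclideanSpace ℝ (Fin n) => p.1 • η p.2) p := by
      have hAsum : A = (fun p : ℝ × EuclideanSpace ℝ (Fin n) => p.2) +
          (fun p : ℝ × EuclideanSpace ℝ (Fin n) => p.1 • η p.2) := rfl
      rw [hAsum]
      exact iteratedFDeriv_add_apply contDiff_snd.contDiffAt (hsm.of_le (hcastle i)).contDiffAt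
    rw [hsplit]
    refine le_trans (norm_add_le _ _) (le_trans ?_ (le_self_pow₀ hD1 (by omega)))
    have hbsnd : ‖iteratedFDeriv ℝ i (fun p : ℝ × EuclideanSpace ℝ (Fin n) => p.2) p‖ ≤ 1 := by
      have hcoe : (fun p : ℝ × EuclideanSpace ℝ (Fin n) => p.2)
          = ⇑(ContinuousLinearMap.snd ℝ ℝ (EuclideanSpace ℝ (Fin n))) := rfl
      rw [hcoe]
      exact le_trans (my_clm_iFD_bound _ _ h1i p) (by apply ContinuousLinearMap.norm_snd_le)
    have hbsm : ‖iteratedFDeriv ℝ i (fun p : ℝ × EuclideanSpace ℝ (Fin n) =>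
        p.1 • η p.2) p‖ ≤ 2 ^ k * Mη := by
      refine le_trans (norm_iteratedFDeriv_smul_le (𝕜' := ℝ)
        (f := fun p : ℝ × EuclideanSpace ℝ (Fin n) => p.1)
        (g := fun p : ℝ × EuclideanSpace ℝ (Fin n) => η p.2)
        contDiff_fst (hη'.comp contDiff_snd) p (hcastle i)) ?_
      refine le_trans (my_choose_sum i _ _ 1 Mη
        (fun l _ => hfstb l p hp)
        (fun l hl => hηsb l (by omega) p)
        (fun l => norm_nonneg _) (fun l => norm_nonneg _) h0Mη) ?_
      have h2i : (2:ℝ) ^ i ≤ 2 ^ k := by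
        apply pow_le_pow_right₀ one_le_two hik
      calc (2:ℝ) ^ i * 1 * Mη = 2 ^ i * Mη := by ring
        _ ≤ 2 ^ k * Mη := mul_le_mul_of_nonneg_right h2i h0Mη
    rw [hD_def]
    linarith
  have h0fac : (0:ℝ) ≤ (k.factorial : ℝ) := by positivity
  have h0MA : (0:ℝ) ≤ (k.factorial : ℝ) * Mξ2 * D ^ k :=
    mul_nonneg (mul_nonneg h0fac h0Mξ) (pow_nonneg h0D k)
  have hΓA : ∀ i ≤ k, ∀ p : ℝ × EuclideanSpace ℝ (Fin n), |p.1| ≤ 1 →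
      ‖iteratedFDeriv ℝ i (fun p : ℝ × EuclideanSpace ℝ (Fin n) =>
        fderiv ℝ (fderiv ℝ ξ) (A p)) p‖ ≤ (k.factorial : ℝ) * Mξ2 * D ^ k := by
    intro i hik p hp
    have hcomp : (fun p : ℝ × EuclideanSpace ℝ (Fin n) => fderiv ℝ (fderiv ℝ ξ) (A p))
        = (fderiv ℝ (fderiv ℝ ξ)) ∘ A := rfl
    rw [hcomp]
    refine le_trans (norm_iteratedFDeriv_comp_le hd2ξ hA (hcastle i) p
      (C := Mξ2) (D := D) (fun l hl => hΓ l (by omega) _)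
      (fun l h1l hli => hAb l h1l (by omega) p hp)) ?_
    have h1 : (i.factorial : ℝ) ≤ (k.factorial : ℝ) := by
      exact_mod_cast Nat.factorial_le hik
    have h2 : D ^ i ≤ D ^ k := pow_le_pow_right₀ hD1 hik
    have h3 : (i.factorial : ℝ) * Mξ2 ≤ (k.factorial : ℝ) * Mξ2 :=
      mul_le_mul_of_nonneg_right h1 h0Mξ
    exact mul_le_mul h3 h2 (pow_nonneg h0D i) (mul_nonneg h0fac h0Mξ)
  have h0MI : (0:ℝ) ≤ 2 ^ k * ((k.factorial : ℝ) * Mξ2 * D ^ k) * Mη :=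
    mul_nonneg (mul_nonneg (by positivity) h0MA) h0Mη
  have hInner : ∀ i ≤ k, ∀ p : ℝ × EuclideanSpace ℝ (Fin n), |p.1| ≤ 1 →
      ‖iteratedFDeriv ℝ i (fun p : ℝ × EuclideanSpace ℝ (Fin n) =>
        (fderiv ℝ (fderiv ℝ ξ) (A p)) (η p.2)) p‖ ≤
        2 ^ k * ((k.factorial : ℝ) * Mξ2 * D ^ k) * Mη := by
    intro i hik p hp
    refine le_trans (norm_iteratedFDeriv_clm_apply
      (f := fun p : ℝ × EuclideanSpace ℝ (Fin n) => fderiv ℝ (fderiv ℝ ξ) (A p))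
      (g := fun p : ℝ × EuclideanSpace ℝ (Fin n) => η p.2)
      (hd2ξ.comp hA) (hη'.comp contDiff_snd) p (hcastle i)) ?_
    refine le_trans (my_choose_sum i _ _ ((k.factorial : ℝ) * Mξ2 * D ^ k) Mη
      (fun l hl => hΓA l (by omega) p hp)
      (fun l hl => hηsb l (by omega) p)
      (fun l => norm_nonneg _) (fun l => norm_nonneg _) h0Mη) ?_
    have h2i : (2:ℝ) ^ i ≤ 2 ^ k := pow_le_pow_right₀ one_le_two hik
    exact mul_le_mul_of_nonneg_right
      (mul_le_mul_of_nonneg_right h2i h0MA) h0Mη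
  -- uniform bound on the iterated derivatives of W
  obtain ⟨K, hK0, hK⟩ : ∃ K, 0 ≤ K ∧ ∀ j ≤ k, ∀ p : ℝ × EuclideanSpace ℝ (Fin n), |p.1| ≤ 1 →
      ‖iteratedFDeriv ℝ j W p‖ ≤ K := by
    refine ⟨2 ^ k * (2 ^ k * ((k.factorial : ℝ) * Mξ2 * D ^ k) * Mη) * Mη,
      mul_nonneg (mul_nonneg (by positivity) h0MI) h0Mη, ?_⟩
    intro i hik p hp
    rw [hW_def]
    refine le_trans (norm_iteratedFDeriv_clm_apply
      (f := fun p : ℝ × EuclideanSpace ℝ (Fin n) => (fderiv ℝ (fderiv ℝ ξ) (A p)) (η p.2))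
      (g := fun p : ℝ × EuclideanSpace ℝ (Fin n) => η p.2)
      ((hd2ξ.comp hA).clm_apply (hη'.comp contDiff_snd))
      (hη'.comp contDiff_snd) p (hcastle i)) ?_
    refine le_trans (my_choose_sum i _ _ (2 ^ k * ((k.factorial : ℝ) * Mξ2 * D ^ k) * Mη) Mη
      (fun l hl => hInner l (by omega) p hp)
      (fun l hl => hηsb l (by omega) p)
      (fun l => norm_nonneg _) (fun l => norm_nonneg _) h0Mη) ?_
    have h2i : (2:ℝ) ^ i ≤ 2 ^ k := pow_le_pow_right₀ one_le_two hik
    exact mul_le_mul_of_nonneg_right (mul_le_mul_of_nonneg_right h2i h0MI) h0Mη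
  refine ⟨K, 1, one_pos, ?_⟩
  intro h hh j hj x
  have hgoalfun : (fun x' => ξ (x' + h • η x') - ξ x' - h * fderiv ℝ ξ x' (η x'))
      = fun x' => F (h, x') := rfl
  rw [hgoalfun, my_slice F hF j h x]
  have hKh2 : 0 ≤ K * h ^ 2 := by positivity
  rw [ContinuousMultilinearMap.opNorm_le_iff hKh2]
  intro v
  set M : Fin j → ℝ × EuclideanSpace ℝ (Fin n) := fun i => (ContinuousLinearMap.inr ℝ ℝ (EuclideanSpace ℝ (Fin n))) (v i) with hM_def
  have hMnorm : ∀ i, ‖M i‖ = ‖v i‖ := by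
    intro i
    simp [hM_def, Prod.norm_def]
  set Pv : ℝ := ∏ i, ‖v i‖ with hPv_def
  have hPv0 : 0 ≤ Pv := Finset.prod_nonneg fun i _ => norm_nonneg _
  have happly : ((iteratedFDeriv ℝ j F (h, x)).compContinuousLinearMap
      (fun _ => ContinuousLinearMap.inr ℝ ℝ (EuclideanSpace ℝ (Fin n)))) v = iteratedFDeriv ℝ j F (h, x) M := by
    rfl
  rw [happly]
  -- the three curves
  set u : ℝ → ℝ := fun t => iteratedFDeriv ℝ j F (t, x) M with hu_def
  set u₁ : ℝ → ℝ := fun t => iteratedFDeriv ℝ j χ (t, x) M with hu1_def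
  have hu : ∀ t, HasDerivAt u (u₁ t) t := by
    intro t
    have := my_curve F hF j x M t
    rwa [hFe] at this
  have hu1 : ∀ t, HasDerivAt u₁ (iteratedFDeriv ℝ j W (t, x) M) t := by
    intro t
    have := my_curve χ hχ j x M t
    rwa [hχe] at this
  have hu0 : u 0 = 0 := by
    have h0 : (fun x' : EuclideanSpace ℝ (Fin n) => F (0, x')) = fun _ : EuclideanSpace ℝ (Fin n) => (0 : ℝ) := by
      funext x'
      simp [hF_def, hA_def]
    have hs := my_slice F hF j 0 x
    rw [h0, iteratedFDeriv_zero_fun] at hs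
    have : iteratedFDeriv ℝ j F (0, x) M
        = ((iteratedFDeriv ℝ j F (0, x)).compContinuousLinearMap
            (fun _ => ContinuousLinearMap.inr ℝ ℝ (EuclideanSpace ℝ (Fin n)))) v := rfl
    rw [hu_def]
    simp only [this, ← hs]
    simp
  have hu10 : u₁ 0 = 0 := by
    have h0 : (fun x' : EuclideanSpace ℝ (Fin n) => χ (0, x')) = fun _ : EuclideanSpace ℝ (Fin n) => (0 : ℝ) := by
      funext x'
      simp [hχ_def, hA_def]
    have hs := my_slice χ hχ j 0 x
    rw [h0, iteratedFDeriv_zero_fun] at hs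
    have : iteratedFDeriv ℝ j χ (0, x) M
        = ((iteratedFDeriv ℝ j χ (0, x)).compContinuousLinearMap
            (fun _ => ContinuousLinearMap.inr ℝ ℝ (EuclideanSpace ℝ (Fin n)))) v := rfl
    rw [hu1_def]
    simp only [this, ← hs]
    simp
  have hWb : ∀ t : ℝ, |t| ≤ 1 → |iteratedFDeriv ℝ j W (t, x) M| ≤ K * Pv := by
    intro t ht
    calc |iteratedFDeriv ℝ j W (t, x) M|
        ≤ ‖iteratedFDeriv ℝ j W (t, x)‖ * ∏ i, ‖M i‖ :=
          (iteratedFDeriv ℝ j W (t, x)).le_opNorm M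
      _ ≤ K * Pv := by
          rw [hPv_def]
          have : (∏ i, ‖M i‖) = ∏ i, ‖v i‖ := Finset.prod_congr rfl fun i _ => hMnorm i
          rw [this]
          exact mul_le_mul_of_nonneg_right (hK j hj (t, x) ht) hPv0
  have step1 : ∀ t : ℝ, |t| ≤ |h| → |u₁ t| ≤ (K * Pv) * |t| := by
    intro t ht
    have hmvt := Convex.norm_image_sub_le_of_norm_hasDerivWithin_le
      (f := u₁) (f' := fun z => iteratedFDeriv ℝ j W (z, x) M)
      (s := Set.uIcc (0 : ℝ) t) (C := K * Pv)
      (fun z _ => (hu1 z).hasDerivWithinAt)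
      (fun z hz => by
        have h1 : |z| ≤ 1 := le_trans (le_trans (my_abs_mem_uIcc hz) ht) hh
        simpa using hWb z h1)
      (convex_uIcc 0 t) Set.left_mem_uIcc Set.right_mem_uIcc
    rw [hu10] at hmvt
    simpa [Real.norm_eq_abs] using hmvt
  have step2 : |u h| ≤ ((K * Pv) * |h|) * |h| := by
    have hmvt := Convex.norm_image_sub_le_of_norm_hasDerivWithin_le
      (f := u) (f' := u₁)
      (s := Set.uIcc (0 : ℝ) h) (C := (K * Pv) * |h|)
      (fun z _ => (hu z).hasDerivWithinAt)
      (fun z hz => by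
        have h1 : |z| ≤ |h| := my_abs_mem_uIcc hz
        have := step1 z h1
        have h2 : (K * Pv) * |z| ≤ (K * Pv) * |h| :=
          mul_le_mul_of_nonneg_left h1 (by positivity)
        simpa [Real.norm_eq_abs] using le_trans this h2)
      (convex_uIcc 0 h) Set.left_mem_uIcc Set.right_mem_uIcc
    rw [hu0] at hmvt
    simpa [Real.norm_eq_abs] using hmvt
  calc ‖iteratedFDeriv ℝ j F (h, x) M‖ = |u h| := rfl
    _ ≤ ((K * Pv) * |h|) * |h| := step2
    _ = K * h ^ 2 * Pv := by rw [show K * Pv * |h| * |h| = K * |h| ^ 2 * Pv by ring, sq_abs]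
end

section
/- Suppose ξ : ℝⁿ → ℝ and η : ℝⁿ → ℝⁿ are sufficiently smooth, η ∈ W^{k,∞}, and ∇³ξ ∈ W^{k,∞}. Then ‖ξ(· + η(·)h) − ξ(· − η(·)h) − 2h ∇ξ(·)η(·)‖_{k,∞} = O(h³) as h → 0. -/
set_option maxHeartbeats 1000000
set_option synthInstance.maxHeartbeats 1000000

open ContinuousLinearMap

section Aux
variable {E : Type} [NormedAddCommGroup E] [NormedSpace ℝ E]

/-- `fderiv` with the instances of the codomain taken from its normed structure. -/
noncomputable abbrev fderivN {F : Type} [NormedAddCommGroup F] [NormedSpace ℝ F]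
    (f : E → F) : E → E →L[ℝ] F := fderiv ℝ f

theorem norm_iteratedFDeriv_fderivN {F : Type} [NormedAddCommGroup F] [NormedSpace ℝ F]
    (f : E → F) (i : ℕ) (x : E) :
    ‖iteratedFDeriv ℝ i (fderivN f) x‖ = ‖iteratedFDeriv ℝ (i+1) f x‖ :=
  norm_iteratedFDeriv_fderiv

noncomputable def pd {F : Type} [NormedAddCommGroup F] [NormedSpace ℝ F]
    (f : E × ℝ → F) : E × ℝ → F :=
  fun y => fderiv ℝ f y ((0 : E), (1 : ℝ))

theorem ContDiff.pd' {F : Type} [NormedAddCommGroup F] [NormedSpace ℝ F]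
    {f : E × ℝ → F} (hf : ContDiff ℝ (⊤ : ℕ∞) f) : ContDiff ℝ (⊤ : ℕ∞) (pd f) :=
  (ContinuousLinearMap.apply ℝ F ((0 : E), (1 : ℝ))).contDiff.comp (hf.fderiv_right (by simp))

theorem hasDerivAt_slice {F : Type} [NormedAddCommGroup F] [NormedSpace ℝ F]
    {f : E × ℝ → F} (hf : ContDiff ℝ (⊤ : ℕ∞) f) (x : E) (h : ℝ) :
    HasDerivAt (fun s => f (x, s)) (pd f (x, h)) h := by
  have h1 : HasDerivAt (fun s : ℝ => ((x, s) : E × ℝ)) ((0 : E), (1 : ℝ)) h := by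
    simpa using (hasDerivAt_const h x).prodMk (hasDerivAt_id h)
  exact ((hf.differentiable (by simp) (x, h)).hasFDerivAt).comp_hasDerivAt h h1

theorem fderiv_slice {F : Type} [NormedAddCommGroup F] [NormedSpace ℝ F]
    {f : E × ℝ → F} (hf : ContDiff ℝ (⊤ : ℕ∞) f) (s : ℝ) (x : E) :
    fderiv ℝ (fun x' => f (x', s)) x =
      (fderiv ℝ f (x, s)).comp (ContinuousLinearMap.inl ℝ E ℝ) :=
  (((hf.differentiable (by simp) (x, s)).hasFDerivAt).comp x
    (hasFDerivAt_prodMk_left x s)).fderiv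

/-- `d/ds` of the `j`-th spatial derivative is the `j`-th spatial derivative of `pd f`. -/
theorem Tderiv (j : ℕ) :
    ∀ {F : Type} [NormedAddCommGroup F] [NormedSpace ℝ F]
      (f : E × ℝ → F), ContDiff ℝ (⊤ : ℕ∞) f → ∀ (x : E) (h : ℝ),
      HasDerivAt (fun s => iteratedFDeriv ℝ j (fun x' => f (x', s)) x)
        (iteratedFDeriv ℝ j (fun x' => pd f (x', h)) x) h := by
  induction j with
  | zero =>
    intro F _ _ f hf x h
    have h0 : ∀ (g : E → F) (x : E), iteratedFDeriv ℝ 0 g x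
        = (continuousMultilinearCurryFin0 ℝ E F).symm (g x) := by
      intro g x; ext m; simp
    simp only [h0]
    exact (((continuousMultilinearCurryFin0 ℝ E F).symm :
        F →L[ℝ] ContinuousMultilinearMap ℝ (fun _ : Fin 0 => E) F).hasFDerivAt).comp_hasDerivAt h
      (hasDerivAt_slice hf x h)
  | succ j ih =>
    intro F _ _ f hf x h
    have hd1 : Differentiable ℝ (fderiv ℝ f) := (hf.fderiv_right (m := (⊤ : ℕ∞)) (by simp)).differentiable (by simp)
    set c : ((E × ℝ) →L[ℝ] F) →L[ℝ] (E →L[ℝ] F) :=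
      (ContinuousLinearMap.compL ℝ E (E × ℝ) F).flip (ContinuousLinearMap.inl ℝ E ℝ) with hc
    have hDfc : ContDiff ℝ (⊤ : ℕ∞) (fun y => c (fderiv ℝ f y)) :=
      c.contDiff.comp (hf.fderiv_right (by simp))
    set L : ContinuousMultilinearMap ℝ (fun _ : Fin j => E) (E →L[ℝ] F) →L[ℝ]
        ContinuousMultilinearMap ℝ (fun _ : Fin (j+1) => E) F :=
      ((continuousMultilinearCurryRightEquiv' ℝ j E F).symm :
        ContinuousMultilinearMap ℝ (fun _ : Fin j => E) (E →L[ℝ] F) →L[ℝ]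
          ContinuousMultilinearMap ℝ (fun _ : Fin (j+1) => E) F) with hLdef
    have hrw : ∀ (g : E × ℝ → F) (_ : ContDiff ℝ (⊤ : ℕ∞) g) (s : ℝ),
        iteratedFDeriv ℝ (j+1) (fun x' => g (x', s)) x
          = L (iteratedFDeriv ℝ j (fun x' => c (fderiv ℝ g (x', s))) x) := by
      intro g hg s
      rw [iteratedFDeriv_succ_eq_comp_right]
      have heq : (fun x' => fderiv ℝ (fun x'' => g (x'', s)) x') =
          (fun x' => c (fderiv ℝ g (x', s))) := by
        funext x'
        rw [fderiv_slice hg s x']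
        rfl
      show (continuousMultilinearCurryRightEquiv' ℝ j E F).symm
          (iteratedFDeriv ℝ j (fun x' => fderiv ℝ (fun x'' => g (x'', s)) x') x) = _
      rw [heq]
      rfl
    have hswap : (fun x' => pd (fun y => c (fderiv ℝ f y)) (x', h))
        = fun x' => c (fderiv ℝ (pd f) (x', h)) := by
      funext z
      have hd2 : HasFDerivAt (fderiv ℝ f) (fderiv ℝ (fderiv ℝ f) (z, h)) (z, h) :=
        (hd1 _).hasFDerivAt
      have hsymm := second_derivative_symmetric
        (fun y => (hf.differentiable (by simp) y).hasFDerivAt) hd2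
      have h1 : fderiv ℝ (fun y => c (fderiv ℝ f y)) (z, h)
          = c.comp (fderiv ℝ (fderiv ℝ f) (z, h)) :=
        (c.hasFDerivAt.comp (z, h) hd2).fderiv
      have h2 : fderiv ℝ (pd f) (z, h)
          = (ContinuousLinearMap.apply ℝ F ((0:E),(1:ℝ))).comp
              (fderiv ℝ (fderiv ℝ f) (z, h)) :=
        ((ContinuousLinearMap.apply ℝ F ((0:E),(1:ℝ))).hasFDerivAt.comp (z, h) hd2).fderiv
      show fderiv ℝ (fun y => c (fderiv ℝ f y)) (z, h) ((0:E),(1:ℝ)) = _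
      rw [h1, h2]
      ext w
      simp only [hc, ContinuousLinearMap.coe_comp', Function.comp_apply,
        ContinuousLinearMap.flip_apply, ContinuousLinearMap.compL_apply,
        ContinuousLinearMap.comp_apply, ContinuousLinearMap.inl_apply,
        ContinuousLinearMap.apply_apply]
      exact (hsymm _ _).symm
    have hfun : (fun s => iteratedFDeriv ℝ (j+1) (fun x' => f (x', s)) x)
        = fun s => L (iteratedFDeriv ℝ j (fun x' => c (fderiv ℝ f (x', s))) x) :=
      funext fun s => hrw f hf s
    rw [hfun]
    rw [hrw (pd f) hf.pd' h]
    rw [← hswap]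
    exact (L.hasFDerivAt).comp_hasDerivAt h (ih (fun y => c (fderiv ℝ f y)) hDfc x h)


theorem poly_bound_nonneg {F : Type} [NormedAddCommGroup F] [NormedSpace ℝ F]
    {f f' : ℝ → F} (hf : ∀ t, HasDerivAt f (f' t) t) (h0 : f 0 = 0) {c : ℝ} (m : ℕ)
    (hb : ∀ t, |t| ≤ 1 → ‖f' t‖ ≤ c * |t| ^ m) :
    ∀ h : ℝ, 0 ≤ h → h ≤ 1 → ‖f h‖ ≤ c / (m + 1) * h ^ (m + 1) := by
  intro h h0' h1'
  have hc : 0 ≤ c := by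
    have := (norm_nonneg (f' 1)).trans (hb 1 (by norm_num))
    simpa using this
  have hB : ∀ t : ℝ, HasDerivAt (fun t => c / (m+1) * t ^ (m+1)) (c * t ^ m) t := by
    intro t
    have := (hasDerivAt_pow (m+1) t).const_mul (c / (m+1))
    refine this.congr_deriv ?_
    have hm : ((m : ℝ) + 1) ≠ 0 := by positivity
    push_cast
    field_simp
  have key := image_norm_le_of_norm_deriv_right_le_deriv_boundary
    (f := f) (f' := f') (a := 0) (b := h)
    (fun t _ => (hf t).continuousAt.continuousWithinAt)
    (fun t _ => (hf t).hasDerivWithinAt)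
    (by simp [h0])
    hB
    (by
      intro t ht
      have ht0 : 0 ≤ t := ht.1
      have ht1 : |t| ≤ 1 := by rw [abs_of_nonneg ht0]; exact le_of_lt (lt_of_lt_of_le ht.2 h1')
      have := hb t ht1
      rwa [abs_of_nonneg ht0] at this)
  exact key (Set.right_mem_Icc.mpr h0')

theorem poly_bound {F : Type} [NormedAddCommGroup F] [NormedSpace ℝ F]
    {f f' : ℝ → F} (hf : ∀ t, HasDerivAt f (f' t) t) (h0 : f 0 = 0) {c : ℝ} (m : ℕ)
    (hb : ∀ t, |t| ≤ 1 → ‖f' t‖ ≤ c * |t| ^ m) :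
    ∀ h : ℝ, |h| ≤ 1 → ‖f h‖ ≤ c / (m + 1) * |h| ^ (m + 1) := by
  intro h h1
  rcases le_or_gt 0 h with hh | hh
  · rw [abs_of_nonneg hh]
    exact poly_bound_nonneg hf h0 m hb h hh (by rwa [abs_of_nonneg hh] at h1)
  · have hg : ∀ t : ℝ, HasDerivAt (fun t => f (-t)) ((-1 : ℝ) • f' (-t)) t := by
      intro t
      exact (hf (-t)).scomp t ((hasDerivAt_id t).neg)
    have hgb : ∀ t : ℝ, |t| ≤ 1 → ‖(-1 : ℝ) • f' (-t)‖ ≤ c * |t| ^ m := by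
      intro t ht
      rw [norm_smul]
      simpa [abs_neg] using hb (-t) (by rwa [abs_neg])
    have := poly_bound_nonneg hg (by simpa using h0) m hgb (-h) (by linarith)
      (by rwa [abs_of_neg hh] at h1)
    rw [abs_of_neg hh]
    simpa using this

theorem exists_unif {α : Type} (k : ℕ) (g : ℕ → α → ℝ)
    (h : ∀ j, j ≤ k → ∃ B, ∀ x, g j x ≤ B) :
    ∃ B, ∀ j, j ≤ k → ∀ x, g j x ≤ B := by
  induction k with
  | zero =>
    obtain ⟨B, hB⟩ := h 0 le_rfl
    exact ⟨B, fun j hj x => by rw [Nat.le_zero.mp hj]; exact hB x⟩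
  | succ k ih =>
    obtain ⟨B₁, h₁⟩ := ih fun j hj => h j (hj.trans (Nat.le_succ k))
    obtain ⟨B₂, h₂⟩ := h (k+1) le_rfl
    refine ⟨max B₁ B₂, fun j hj x => ?_⟩
    rcases Nat.lt_succ_iff_lt_or_eq.mp (Nat.lt_succ_of_le hj) with hj' | hj'
    · exact (h₁ j (Nat.lt_succ_iff.mp hj') x).trans (le_max_left _ _)
    · rw [hj']; exact (h₂ x).trans (le_max_right _ _)

theorem clm_apply_unif_bound {E F G : Type}
    [NormedAddCommGroup E] [NormedSpace ℝ E] [Nonempty E]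
    [NormedAddCommGroup F] [NormedSpace ℝ F]
    [NormedAddCommGroup G] [NormedSpace ℝ G]
    (m : ℕ) {f : E → F →L[ℝ] G} {g : E → F}
    (hf : ContDiff ℝ (⊤ : ℕ∞) f) (hg : ContDiff ℝ (⊤ : ℕ∞) g) {Cf Cg : ℝ}
    (hCf : ∀ i, i ≤ m → ∀ x, ‖iteratedFDeriv ℝ i f x‖ ≤ Cf)
    (hCg : ∀ i, i ≤ m → ∀ x, ‖iteratedFDeriv ℝ i g x‖ ≤ Cg) :
    ∀ i, i ≤ m → ∀ x, ‖iteratedFDeriv ℝ i (fun y => f y (g y)) x‖ ≤ 2 ^ m * Cf * Cg := by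
  have x₀ : E := Classical.arbitrary E
  have hCf0 : 0 ≤ Cf := (norm_nonneg _).trans (hCf 0 (Nat.zero_le _) x₀)
  have hCg0 : 0 ≤ Cg := (norm_nonneg _).trans (hCg 0 (Nat.zero_le _) x₀)
  intro i hi x
  calc ‖iteratedFDeriv ℝ i (fun y => f y (g y)) x‖
      ≤ ∑ l ∈ Finset.range (i + 1), (i.choose l : ℝ) * ‖iteratedFDeriv ℝ l f x‖ *
          ‖iteratedFDeriv ℝ (i - l) g x‖ :=
        norm_iteratedFDeriv_clm_apply hf hg x (by exact_mod_cast le_top)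
    _ ≤ ∑ l ∈ Finset.range (i + 1), (i.choose l : ℝ) * Cf * Cg := by
        apply Finset.sum_le_sum
        intro l hl
        have hl' : l ≤ i := Nat.lt_succ_iff.mp (Finset.mem_range.mp hl)
        have h1 : ‖iteratedFDeriv ℝ l f x‖ ≤ Cf := hCf l (hl'.trans hi) x
        have h2 : ‖iteratedFDeriv ℝ (i - l) g x‖ ≤ Cg := hCg _ ((Nat.sub_le i l).trans hi) x
        gcongr
    _ = (2 : ℝ) ^ i * Cf * Cg := by
        rw [← Finset.sum_mul, ← Finset.sum_mul, ← Nat.cast_sum, Nat.sum_range_choose]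
        push_cast
        ring
    _ ≤ 2 ^ m * Cf * Cg := by
        have : (2:ℝ) ^ i ≤ 2 ^ m := pow_le_pow_right₀ (by norm_num) hi
        nlinarith [mul_nonneg hCf0 hCg0]

end Aux

noncomputable section
namespace S8
variable {n : ℕ}

local notation "E" => EuclideanSpace ℝ (Fin n)

variable (ξ : EuclideanSpace ℝ (Fin n) → ℝ) (η : EuclideanSpace ℝ (Fin n) → EuclideanSpace ℝ (Fin n))

def Gf : E × ℝ → ℝ := fun y =>
  ξ (y.1 + y.2 • η y.1) - ξ (y.1 - y.2 • η y.1) - 2 * y.2 * (fderiv ℝ ξ y.1) (η y.1)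

def G1 : E × ℝ → ℝ := fun y =>
  fderiv ℝ ξ (y.1 + y.2 • η y.1) (η y.1) + fderiv ℝ ξ (y.1 - y.2 • η y.1) (η y.1)
    - 2 * fderiv ℝ ξ y.1 (η y.1)

def G2 : E × ℝ → ℝ := fun y =>
  fderiv ℝ (fderiv ℝ ξ) (y.1 + y.2 • η y.1) (η y.1) (η y.1)
    - fderiv ℝ (fderiv ℝ ξ) (y.1 - y.2 • η y.1) (η y.1) (η y.1)

def G3 : E × ℝ → ℝ := fun y =>
  fderiv ℝ (fderiv ℝ (fderiv ℝ ξ)) (y.1 + y.2 • η y.1) (η y.1) (η y.1) (η y.1)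
    + fderiv ℝ (fderiv ℝ (fderiv ℝ ξ)) (y.1 - y.2 • η y.1) (η y.1) (η y.1) (η y.1)

variable {ξ η}



theorem hp (hη : ContDiff ℝ (⊤ : ℕ∞) η) (y : E × ℝ) : HasFDerivAt (fun y : E × ℝ => y.1 + y.2 • η y.1)
    ((fst ℝ E ℝ) + ((y.2 • (fderiv ℝ η y.1).comp (fst ℝ E ℝ)) +
      (snd ℝ E ℝ).smulRight (η y.1))) y :=
  (hasFDerivAt_fst).add ((hasFDerivAt_snd).smul
    (((hη.differentiable (by simp)) y.1).hasFDerivAt.comp y hasFDerivAt_fst))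

theorem hq (hη : ContDiff ℝ (⊤ : ℕ∞) η) (y : E × ℝ) : HasFDerivAt (fun y : E × ℝ => y.1 - y.2 • η y.1)
    ((fst ℝ E ℝ) - ((y.2 • (fderiv ℝ η y.1).comp (fst ℝ E ℝ)) +
      (snd ℝ E ℝ).smulRight (η y.1))) y :=
  (hasFDerivAt_fst).sub ((hasFDerivAt_snd).smul
    (((hη.differentiable (by simp)) y.1).hasFDerivAt.comp y hasFDerivAt_fst))

theorem hbfst (hη : ContDiff ℝ (⊤ : ℕ∞) η) (y : E × ℝ) : HasFDerivAt (fun y : E × ℝ => η y.1)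
    ((fderiv ℝ η y.1).comp (fst ℝ E ℝ)) y :=
  ((hη.differentiable (by simp)) y.1).hasFDerivAt.comp y hasFDerivAt_fst

theorem pd_Gf (hξ : ContDiff ℝ (⊤ : ℕ∞) ξ) (hη : ContDiff ℝ (⊤ : ℕ∞) η) : pd (Gf ξ η) = G1 ξ η := by
  funext y
  have ha : HasFDerivAt (fun y : E × ℝ => fderiv ℝ ξ y.1)
      ((fderiv ℝ (fderiv ℝ ξ) y.1).comp (fst ℝ E ℝ)) y :=
    (((hξ.fderiv_right (m := (⊤ : ℕ∞)) (by simp)).differentiable (by simp)) y.1).hasFDerivAt.comp y hasFDerivAt_fst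
  have H : HasFDerivAt (fun y : E × ℝ =>
      ξ (y.1 + y.2 • η y.1) - ξ (y.1 - y.2 • η y.1) - 2 * y.2 * (fderiv ℝ ξ y.1) (η y.1)) _ y :=
    (((hξ.differentiable (by simp) _).hasFDerivAt.comp y (hp hη y)).sub
      ((hξ.differentiable (by simp) _).hasFDerivAt.comp y (hq hη y))).sub
      ((hasFDerivAt_snd.const_mul (2:ℝ)).mul (ha.clm_apply (hbfst hη y)))
  show fderiv ℝ (fun y : E × ℝ =>
      ξ (y.1 + y.2 • η y.1) - ξ (y.1 - y.2 • η y.1)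
        - 2 * y.2 * (fderiv ℝ ξ y.1) (η y.1)) y ((0 : E), (1 : ℝ)) = G1 ξ η y
  rw [H.fderiv]
  simp only [ContinuousLinearMap.sub_apply, ContinuousLinearMap.add_apply,
    ContinuousLinearMap.coe_comp', Function.comp_apply, ContinuousLinearMap.smul_apply,
    ContinuousLinearMap.smulRight_apply, ContinuousLinearMap.coe_fst',
    ContinuousLinearMap.coe_snd', ContinuousLinearMap.flip_apply, map_zero, smul_eq_mul,
    one_smul, zero_add, add_zero, smul_zero, mul_zero, mul_one, zero_sub, map_neg,
    ContinuousLinearMap.zero_apply, G1]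
  ring





theorem pd_G1 (hξ : ContDiff ℝ (⊤ : ℕ∞) ξ) (hη : ContDiff ℝ (⊤ : ℕ∞) η) :
    pd (G1 ξ η) = G2 ξ η := by
  funext y
  have hξ1 : ContDiff ℝ (⊤ : ℕ∞) (fderiv ℝ ξ) := hξ.fderiv_right (by simp)
  have hξ2 : ContDiff ℝ (⊤ : ℕ∞) (fderiv ℝ (fderiv ℝ ξ)) := hξ1.fderiv_right (by simp)
  have hc1 : HasFDerivAt (fun y : E × ℝ => fderiv ℝ ξ (y.1 + y.2 • η y.1)) _ y :=
    ((hξ1.differentiable (by simp) _).hasFDerivAt.comp y (hp hη y))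
  have hc2 : HasFDerivAt (fun y : E × ℝ => fderiv ℝ ξ (y.1 - y.2 • η y.1)) _ y :=
    ((hξ1.differentiable (by simp) _).hasFDerivAt.comp y (hq hη y))
  have ha : HasFDerivAt (fun y : E × ℝ => fderiv ℝ ξ y.1)
      ((fderiv ℝ (fderiv ℝ ξ) y.1).comp (fst ℝ E ℝ)) y :=
    ((hξ1.differentiable (by simp)) y.1).hasFDerivAt.comp y hasFDerivAt_fst
  have H : HasFDerivAt (fun y : E × ℝ =>
      fderiv ℝ ξ (y.1 + y.2 • η y.1) (η y.1) + fderiv ℝ ξ (y.1 - y.2 • η y.1) (η y.1)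
        - 2 * fderiv ℝ ξ y.1 (η y.1)) _ y :=
    ((hc1.clm_apply (hbfst hη y)).add (hc2.clm_apply (hbfst hη y))).sub
      ((ha.clm_apply (hbfst hη y)).const_mul (2:ℝ))
  show fderiv ℝ (fun y : E × ℝ =>
      fderiv ℝ ξ (y.1 + y.2 • η y.1) (η y.1) + fderiv ℝ ξ (y.1 - y.2 • η y.1) (η y.1)
        - 2 * fderiv ℝ ξ y.1 (η y.1)) y ((0 : E), (1 : ℝ)) = G2 ξ η y
  rw [H.fderiv]
  simp only [ContinuousLinearMap.sub_apply, ContinuousLinearMap.add_apply,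
    ContinuousLinearMap.coe_comp', Function.comp_apply, ContinuousLinearMap.smul_apply,
    ContinuousLinearMap.smulRight_apply, ContinuousLinearMap.coe_fst',
    ContinuousLinearMap.coe_snd', ContinuousLinearMap.flip_apply, map_zero, smul_eq_mul,
    one_smul, zero_add, add_zero, smul_zero, mul_zero, mul_one, zero_sub, map_neg,
    ContinuousLinearMap.zero_apply, ContinuousLinearMap.neg_apply, G2]
  ring

theorem pd_G2 (hξ : ContDiff ℝ (⊤ : ℕ∞) ξ) (hη : ContDiff ℝ (⊤ : ℕ∞) η) :
    pd (G2 ξ η) = G3 ξ η := by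
  funext y
  have hξ1 : ContDiff ℝ (⊤ : ℕ∞) (fderiv ℝ ξ) := hξ.fderiv_right (by simp)
  have hξ2 : ContDiff ℝ (⊤ : ℕ∞) (fderiv ℝ (fderiv ℝ ξ)) := hξ1.fderiv_right (by simp)
  have hc1 : HasFDerivAt (fun y : E × ℝ => fderiv ℝ (fderiv ℝ ξ) (y.1 + y.2 • η y.1)) _ y :=
    ((hξ2.differentiable (by simp) _).hasFDerivAt.comp y (hp hη y))
  have hc2 : HasFDerivAt (fun y : E × ℝ => fderiv ℝ (fderiv ℝ ξ) (y.1 - y.2 • η y.1)) _ y :=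
    ((hξ2.differentiable (by simp) _).hasFDerivAt.comp y (hq hη y))
  have H : HasFDerivAt (fun y : E × ℝ =>
      fderiv ℝ (fderiv ℝ ξ) (y.1 + y.2 • η y.1) (η y.1) (η y.1)
        - fderiv ℝ (fderiv ℝ ξ) (y.1 - y.2 • η y.1) (η y.1) (η y.1)) _ y :=
    ((hc1.clm_apply (hbfst hη y)).clm_apply (hbfst hη y)).sub
      ((hc2.clm_apply (hbfst hη y)).clm_apply (hbfst hη y))
  show fderiv ℝ (fun y : E × ℝ =>
      fderiv ℝ (fderiv ℝ ξ) (y.1 + y.2 • η y.1) (η y.1) (η y.1)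
        - fderiv ℝ (fderiv ℝ ξ) (y.1 - y.2 • η y.1) (η y.1) (η y.1)) y ((0 : E), (1 : ℝ))
      = G3 ξ η y
  rw [H.fderiv]
  simp only [ContinuousLinearMap.sub_apply, ContinuousLinearMap.add_apply,
    ContinuousLinearMap.coe_comp', Function.comp_apply, ContinuousLinearMap.smul_apply,
    ContinuousLinearMap.smulRight_apply, ContinuousLinearMap.coe_fst',
    ContinuousLinearMap.coe_snd', ContinuousLinearMap.flip_apply, map_zero, smul_eq_mul,
    one_smul, zero_add, add_zero, smul_zero, mul_zero, mul_one, zero_sub, map_neg,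
    ContinuousLinearMap.zero_apply, ContinuousLinearMap.neg_apply, G3]
  ring

theorem Gf_zero (x : E) : Gf ξ η (x, 0) = 0 := by
  simp [Gf]

theorem G1_zero (x : E) : G1 ξ η (x, 0) = 0 := by
  simp [G1]; ring

theorem G2_zero (x : E) : G2 ξ η (x, 0) = 0 := by
  simp [G2]

theorem Gf_smooth (hξ : ContDiff ℝ (⊤ : ℕ∞) ξ) (hη : ContDiff ℝ (⊤ : ℕ∞) η) :
    ContDiff ℝ (⊤ : ℕ∞) (Gf ξ η) := by
  have hξ1 : ContDiff ℝ (⊤ : ℕ∞) (fderiv ℝ ξ) := hξ.fderiv_right (by simp)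
  have hpc : ContDiff ℝ (⊤ : ℕ∞) (fun y : E × ℝ => y.1 + y.2 • η y.1) :=
    contDiff_fst.add (contDiff_snd.smul (hη.comp contDiff_fst))
  have hqc : ContDiff ℝ (⊤ : ℕ∞) (fun y : E × ℝ => y.1 - y.2 • η y.1) :=
    contDiff_fst.sub (contDiff_snd.smul (hη.comp contDiff_fst))
  exact ((hξ.comp hpc).sub (hξ.comp hqc)).sub
    (((contDiff_const.mul contDiff_snd)).mul
      (((hξ1.comp contDiff_fst)).clm_apply (hη.comp contDiff_fst)))



theorem r_smooth (hη : ContDiff ℝ (⊤ : ℕ∞) η) (s : ℝ) :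
    ContDiff ℝ (⊤ : ℕ∞) (fun x' : E => x' + s • η x') :=
  contDiff_id.add (hη.const_smul s)

theorem r_deriv_bound (hη : ContDiff ℝ (⊤ : ℕ∞) η) (k : ℕ) {Bη : ℝ}
    (hηB : ∀ i, i ≤ k → ∀ x : E, ‖iteratedFDeriv ℝ i η x‖ ≤ Bη)
    {s : ℝ} (hs : |s| ≤ 1) :
    ∀ i, 1 ≤ i → i ≤ k → ∀ x : E,
      ‖iteratedFDeriv ℝ i (fun x' : E => x' + s • η x') x‖ ≤ (1 + Bη) ^ i := by
  have hBη0 : 0 ≤ Bη := (norm_nonneg _).trans (hηB 0 (Nat.zero_le _) 0)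
  have hD1 : (1:ℝ) ≤ 1 + Bη := by linarith
  have hfd : ∀ x : E, HasFDerivAt (fun x' : E => x' + s • η x')
      (ContinuousLinearMap.id ℝ E + s • fderiv ℝ η x) x := fun x =>
    (hasFDerivAt_id x).add (((hη.differentiable (by simp) x).hasFDerivAt).const_smul s)
  have hfr : fderiv ℝ (fun x' : E => x' + s • η x')
      = fun x => ContinuousLinearMap.id ℝ E + s • fderiv ℝ η x :=
    funext fun x => (hfd x).fderiv
  intro i h1i hik x
  have hd1 : ∀ x : E, ‖fderiv ℝ η x‖ ≤ Bη := by
    intro x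
    have h1 : ‖iteratedFDeriv ℝ 0 (fderiv ℝ η) x‖ = ‖iteratedFDeriv ℝ 1 η x‖ :=
      norm_iteratedFDeriv_fderiv
    rw [norm_iteratedFDeriv_zero] at h1
    rw [h1]
    exact hηB 1 (le_trans h1i hik) x
  match i, h1i with
  | 1, _ =>
    have h0 : ‖iteratedFDeriv ℝ 0 (fderiv ℝ fun x' : E => x' + s • η x') x‖
        = ‖fderiv ℝ (fun x' : E => x' + s • η x') x‖ := norm_iteratedFDeriv_zero
    have h1 : ‖iteratedFDeriv ℝ 1 (fun x' : E => x' + s • η x') x‖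
        = ‖iteratedFDeriv ℝ 0 (fderiv ℝ fun x' : E => x' + s • η x') x‖ :=
      norm_iteratedFDeriv_fderiv.symm
    rw [h1, h0, (hfd x).fderiv, pow_one]
    calc ‖ContinuousLinearMap.id ℝ E + s • fderiv ℝ η x‖
        ≤ ‖ContinuousLinearMap.id ℝ E‖ + ‖s • fderiv ℝ η x‖ := norm_add_le _ _
      _ ≤ 1 + Bη := by
          apply add_le_add ContinuousLinearMap.norm_id_le
          rw [norm_smul]
          calc ‖s‖ * ‖fderiv ℝ η x‖ ≤ 1 * Bη := by
                apply mul_le_mul (by simpa using hs) (hd1 x) (norm_nonneg _) zero_le_one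
            _ = Bη := one_mul _
  | (m+2), _ =>
    have h1 : ‖iteratedFDeriv ℝ (m+2) (fun x' : E => x' + s • η x') x‖
        = ‖iteratedFDeriv ℝ (m+1) (fderiv ℝ (fun x' : E => x' + s • η x')) x‖ :=
      norm_iteratedFDeriv_fderiv.symm
    rw [h1, hfr]
    have h2 : iteratedFDeriv ℝ (m+1)
        (fun x : E => ContinuousLinearMap.id ℝ E + s • fderiv ℝ η x) x
        = iteratedFDeriv ℝ (m+1) (fun _ : E => ContinuousLinearMap.id ℝ E) x
          + iteratedFDeriv ℝ (m+1) (fun x : E => s • fderiv ℝ η x) x :=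
      iteratedFDeriv_add_apply (contDiff_const.of_le le_top).contDiffAt
        (((hη.fderiv_right (m := (⊤ : ℕ∞)) (by simp)).const_smul s).of_le (by exact_mod_cast le_top)).contDiffAt
    rw [h2, iteratedFDeriv_const_of_ne (Nat.succ_ne_zero m), Pi.zero_apply, zero_add,
      iteratedFDeriv_const_smul_apply' ((hη.fderiv_right (m := (⊤ : ℕ∞)) (by simp)).of_le (by exact_mod_cast le_top)).contDiffAt, norm_smul]
    have h3 : ‖iteratedFDeriv ℝ (m+1) (fderiv ℝ η) x‖ = ‖iteratedFDeriv ℝ (m+2) η x‖ :=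
      norm_iteratedFDeriv_fderiv
    rw [h3]
    calc ‖s‖ * ‖iteratedFDeriv ℝ (m+2) η x‖ ≤ 1 * Bη :=
          mul_le_mul (by simpa using hs) (hηB (m+2) hik x) (norm_nonneg _) zero_le_one
      _ = Bη := one_mul _
      _ ≤ (1 + Bη) ^ (m+2) := by
          calc Bη ≤ 1 + Bη := by linarith
            _ ≤ (1 + Bη) ^ (m+2) := le_self_pow₀ (by linarith) (by omega)

theorem comp_bound (hξ3 : ContDiff ℝ (⊤ : ℕ∞) (fderivN (fderiv ℝ (fderiv ℝ ξ))))
    (hη : ContDiff ℝ (⊤ : ℕ∞) η) (k : ℕ) {Bξ Bη : ℝ}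
    (hξB : ∀ i, i ≤ k → ∀ x : E, ‖iteratedFDeriv ℝ i (fderivN (fderiv ℝ (fderiv ℝ ξ))) x‖ ≤ Bξ)
    (hηB : ∀ i, i ≤ k → ∀ x : E, ‖iteratedFDeriv ℝ i η x‖ ≤ Bη)
    {s : ℝ} (hs : |s| ≤ 1) :
    ∀ i, i ≤ k → ∀ x : E,
      ‖iteratedFDeriv ℝ i (fun x' : E => fderivN (fderiv ℝ (fderiv ℝ ξ)) (x' + s • η x')) x‖
        ≤ (k.factorial : ℝ) * Bξ * (1 + Bη) ^ k := by
  intro i hik x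
  have hBη0 : 0 ≤ Bη := (norm_nonneg _).trans (hηB 0 (Nat.zero_le _) 0)
  have hBξ0 : 0 ≤ Bξ := (norm_nonneg _).trans (hξB 0 (Nat.zero_le _) 0)
  have hD1 : (1:ℝ) ≤ 1 + Bη := by linarith
  have key := norm_iteratedFDeriv_comp_le (g := fderivN (fderiv ℝ (fderiv ℝ ξ)))
    (f := fun x' : E => x' + s • η x') (n := i) (N := ((⊤ : ℕ∞) : WithTop ℕ∞))
    hξ3 (r_smooth hη s) (by exact_mod_cast le_top) x
    (C := Bξ) (D := 1 + Bη)
    (fun l hl => hξB l (hl.trans hik) _)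
    (fun l hl1 hl2 => r_deriv_bound hη k hηB hs l hl1 (hl2.trans hik) x)
  have h2 : ‖iteratedFDeriv ℝ i
      (fun x' : E => fderivN (fderiv ℝ (fderiv ℝ ξ)) (x' + s • η x')) x‖
      ≤ (i.factorial : ℝ) * Bξ * (1 + Bη) ^ i := by
    simpa [Function.comp_def] using key
  refine h2.trans ?_
  have hf : (i.factorial : ℝ) ≤ (k.factorial : ℝ) := by
    exact_mod_cast Nat.factorial_le hik
  have hp : (1 + Bη) ^ i ≤ (1 + Bη) ^ k := pow_le_pow_right₀ hD1 hik
  have h3 : (0:ℝ) ≤ (i.factorial : ℝ) * Bξ := by positivity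
  calc (i.factorial : ℝ) * Bξ * (1 + Bη) ^ i ≤ (i.factorial : ℝ) * Bξ * (1 + Bη) ^ k := by
        apply mul_le_mul_of_nonneg_left hp h3
    _ ≤ (k.factorial : ℝ) * Bξ * (1 + Bη) ^ k := by
        have : (0:ℝ) ≤ (1 + Bη) ^ k := by positivity
        apply mul_le_mul_of_nonneg_right (mul_le_mul_of_nonneg_right hf hBξ0) this

theorem term_bound (hξ3 : ContDiff ℝ (⊤ : ℕ∞) (fderivN (fderiv ℝ (fderiv ℝ ξ))))
    (hη : ContDiff ℝ (⊤ : ℕ∞) η) (k : ℕ) {Bξ Bη : ℝ}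
    (hξB : ∀ i, i ≤ k → ∀ x : E, ‖iteratedFDeriv ℝ i (fderivN (fderiv ℝ (fderiv ℝ ξ))) x‖ ≤ Bξ)
    (hηB : ∀ i, i ≤ k → ∀ x : E, ‖iteratedFDeriv ℝ i η x‖ ≤ Bη)
    {s : ℝ} (hs : |s| ≤ 1) :
    ∀ i, i ≤ k → ∀ x : E,
      ‖iteratedFDeriv ℝ i (fun x' : E =>
        fderivN (fderiv ℝ (fderiv ℝ ξ)) (x' + s • η x') (η x') (η x') (η x')) x‖
        ≤ 2^k * (2^k * (2^k * ((k.factorial : ℝ) * Bξ * (1 + Bη) ^ k) * Bη) * Bη) * Bη := by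
  have hc0 : ContDiff ℝ (⊤ : ℕ∞) (fun x' : E => fderivN (fderiv ℝ (fderiv ℝ ξ)) (x' + s • η x')) :=
    hξ3.comp (r_smooth hη s)
  have b0 := comp_bound hξ3 hη k hξB hηB hs
  have b1 := clm_apply_unif_bound k hc0 hη b0 hηB
  have hc1 : ContDiff ℝ (⊤ : ℕ∞) (fun x' : E =>
      fderivN (fderiv ℝ (fderiv ℝ ξ)) (x' + s • η x') (η x')) := hc0.clm_apply hη
  have b2 := clm_apply_unif_bound k hc1 hη b1 hηB
  have hc2 : ContDiff ℝ (⊤ : ℕ∞) (fun x' : E =>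
      fderivN (fderiv ℝ (fderiv ℝ ξ)) (x' + s • η x') (η x') (η x')) := hc1.clm_apply hη
  exact clm_apply_unif_bound k hc2 hη b2 hηB

theorem G3_slice_bound (hξ3 : ContDiff ℝ (⊤ : ℕ∞) (fderivN (fderiv ℝ (fderiv ℝ ξ))))
    (hη : ContDiff ℝ (⊤ : ℕ∞) η) (k : ℕ) {Bξ Bη : ℝ}
    (hξB : ∀ i, i ≤ k → ∀ x : E, ‖iteratedFDeriv ℝ i (fderivN (fderiv ℝ (fderiv ℝ ξ))) x‖ ≤ Bξ)
    (hηB : ∀ i, i ≤ k → ∀ x : E, ‖iteratedFDeriv ℝ i η x‖ ≤ Bη) :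
    ∃ M : ℝ, 0 ≤ M ∧ ∀ s : ℝ, |s| ≤ 1 → ∀ j, j ≤ k → ∀ x : E,
      ‖iteratedFDeriv ℝ j (fun x' => G3 ξ η (x', s)) x‖ ≤ M := by
  have hBη0 : 0 ≤ Bη := (norm_nonneg _).trans (hηB 0 (Nat.zero_le _) 0)
  have hBξ0 : 0 ≤ Bξ := (norm_nonneg _).trans (hξB 0 (Nat.zero_le _) 0)
  set C0 : ℝ := 2^k * (2^k * (2^k * ((k.factorial : ℝ) * Bξ * (1 + Bη) ^ k) * Bη) * Bη) * Bη
    with hC0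
  have hC0nn : 0 ≤ C0 := by positivity
  refine ⟨2 * C0, by positivity, ?_⟩
  intro s hs j hjk x
  have hms : |(-s)| ≤ 1 := by rwa [abs_neg]
  have hplus := term_bound hξ3 hη k hξB hηB hs j hjk x
  have hminus := term_bound hξ3 hη k hξB hηB hms j hjk x
  have hrw : (fun x' : E =>
      fderivN (fderiv ℝ (fderiv ℝ ξ)) (x' + (-s) • η x') (η x') (η x') (η x'))
      = (fun x' : E =>
      fderivN (fderiv ℝ (fderiv ℝ ξ)) (x' - s • η x') (η x') (η x') (η x')) := by
    funext x'
    rw [neg_smul, ← sub_eq_add_neg]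
  rw [hrw] at hminus
  have hsplit : iteratedFDeriv ℝ j (fun x' => G3 ξ η (x', s)) x
      = iteratedFDeriv ℝ j (fun x' : E =>
          fderivN (fderiv ℝ (fderiv ℝ ξ)) (x' + s • η x') (η x') (η x') (η x')) x
        + iteratedFDeriv ℝ j (fun x' : E =>
          fderivN (fderiv ℝ (fderiv ℝ ξ)) (x' - s • η x') (η x') (η x') (η x')) x := by
    have hc1 : ContDiff ℝ (j : WithTop ℕ∞) (fun x' : E =>
        fderivN (fderiv ℝ (fderiv ℝ ξ)) (x' + s • η x') (η x') (η x') (η x')) :=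
      ((((hξ3.comp (r_smooth hη s)).clm_apply hη).clm_apply hη).clm_apply hη).of_le (by exact_mod_cast le_top)
    have hc2 : ContDiff ℝ (j : WithTop ℕ∞) (fun x' : E =>
        fderivN (fderiv ℝ (fderiv ℝ ξ)) (x' - s • η x') (η x') (η x') (η x')) := by
      rw [← hrw]
      exact ((((hξ3.comp (r_smooth hη (-s))).clm_apply hη).clm_apply hη).clm_apply hη).of_le
        (by exact_mod_cast le_top)
    exact iteratedFDeriv_add_apply hc1.contDiffAt hc2.contDiffAt
  rw [hsplit]
  calc ‖_ + _‖ ≤ C0 + C0 := norm_add_le _ _ |>.trans (add_le_add hplus hminus)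
    _ = 2 * C0 := by ring



end S8
end

/-- Central-difference Taylor estimate: if `η ∈ W^{k,∞}` and `∇³ξ ∈ W^{k,∞}`, then
`‖ξ(· + η(·)h) - ξ(· - η(·)h) - 2h ∇ξ(·)η(·)‖_{k,∞} = O(h³)` as `h → 0`. -/
theorem stmt_8 (n k : ℕ)
    (ξ : EuclideanSpace ℝ (Fin n) → ℝ)
    (η : EuclideanSpace ℝ (Fin n) → EuclideanSpace ℝ (Fin n))
    (hξ : ContDiff ℝ (⊤ : ℕ∞) ξ) (hη : ContDiff ℝ (⊤ : ℕ∞) η)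
    (hηb : ∀ j ≤ k, ∃ B, ∀ x, ‖iteratedFDeriv ℝ j η x‖ ≤ B)
    (hξb : ∀ j, 3 ≤ j → j ≤ k + 3 → ∃ B, ∀ x, ‖iteratedFDeriv ℝ j ξ x‖ ≤ B) :
    ∃ C, ∃ h₀ > 0, ∀ h : ℝ, |h| ≤ h₀ → ∀ j ≤ k, ∀ x,
      ‖iteratedFDeriv ℝ j
        (fun x' => ξ (x' + h • η x') - ξ (x' - h • η x')
          - 2 * h * fderiv ℝ ξ x' (η x')) x‖ ≤
      C * |h| ^ 3 := by
  obtain ⟨Bη, hηB⟩ := exists_unif k (fun j x => ‖iteratedFDeriv ℝ j η x‖) (fun j hj => hηb j hj)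
  have norm3 : ∀ (i : ℕ) (x : EuclideanSpace ℝ (Fin n)),
      ‖iteratedFDeriv ℝ i (fderivN (fderiv ℝ (fderiv ℝ ξ))) x‖
        = ‖iteratedFDeriv ℝ (i+3) ξ x‖ := by
    intro i x
    rw [norm_iteratedFDeriv_fderivN, norm_iteratedFDeriv_fderiv, norm_iteratedFDeriv_fderiv]
  obtain ⟨Bξ, hξB'⟩ := exists_unif k
    (fun i x => ‖iteratedFDeriv ℝ i (fderivN (fderiv ℝ (fderiv ℝ ξ))) x‖)
    (fun i _ => by
      obtain ⟨B, hB⟩ := hξb (i+3) (by omega) (by omega)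
      refine ⟨B, fun x => ?_⟩
      show ‖iteratedFDeriv ℝ i (fderivN (fderiv ℝ (fderiv ℝ ξ))) x‖ ≤ B
      rw [norm3 i x]
      exact hB x)
  have hξ3 : ContDiff ℝ (⊤ : ℕ∞) (fderivN (fderiv ℝ (fderiv ℝ ξ))) :=
    ((hξ.fderiv_right (m := (⊤ : ℕ∞)) (by simp)).fderiv_right (m := (⊤ : ℕ∞)) (by simp)).fderiv_right (by simp)
  obtain ⟨M, hM0, hM⟩ := S8.G3_slice_bound hξ3 hη k hξB' hηB
  refine ⟨M, 1, one_pos, ?_⟩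
  intro h hh j hjk x
  have hG : ContDiff ℝ (⊤ : ℕ∞) (S8.Gf ξ η) := S8.Gf_smooth hξ hη
  have hG1 : ContDiff ℝ (⊤ : ℕ∞) (S8.G1 ξ η) := by rw [← S8.pd_Gf hξ hη]; exact hG.pd'
  have hG2 : ContDiff ℝ (⊤ : ℕ∞) (S8.G2 ξ η) := by rw [← S8.pd_G1 hξ hη]; exact hG1.pd'
  have hd0 : ∀ s : ℝ, HasDerivAt (fun s => iteratedFDeriv ℝ j (fun x' => S8.Gf ξ η (x', s)) x)
      ((fun s : ℝ => iteratedFDeriv ℝ j (fun x' => S8.G1 ξ η (x', s)) x) s) s := by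
    intro s
    have := Tderiv j (S8.Gf ξ η) hG x s
    rwa [S8.pd_Gf hξ hη] at this
  have hd1 : ∀ s : ℝ, HasDerivAt (fun s => iteratedFDeriv ℝ j (fun x' => S8.G1 ξ η (x', s)) x)
      ((fun s : ℝ => iteratedFDeriv ℝ j (fun x' => S8.G2 ξ η (x', s)) x) s) s := by
    intro s
    have := Tderiv j (S8.G1 ξ η) hG1 x s
    rwa [S8.pd_G1 hξ hη] at this
  have hd2 : ∀ s : ℝ, HasDerivAt (fun s => iteratedFDeriv ℝ j (fun x' => S8.G2 ξ η (x', s)) x)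
      ((fun s : ℝ => iteratedFDeriv ℝ j (fun x' => S8.G3 ξ η (x', s)) x) s) s := by
    intro s
    have := Tderiv j (S8.G2 ξ η) hG2 x s
    rwa [S8.pd_G2 hξ hη] at this
  have z0 : (fun s : ℝ => iteratedFDeriv ℝ j (fun x' => S8.Gf ξ η (x', s)) x) 0 = 0 := by
    have he : (fun x' => S8.Gf ξ η (x', (0:ℝ))) =
        fun _ : EuclideanSpace ℝ (Fin n) => (0:ℝ) := funext fun x' => S8.Gf_zero x'
    simp only [he, iteratedFDeriv_zero_fun, Pi.zero_apply]
  have z1 : (fun s : ℝ => iteratedFDeriv ℝ j (fun x' => S8.G1 ξ η (x', s)) x) 0 = 0 := by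
    have he : (fun x' => S8.G1 ξ η (x', (0:ℝ))) =
        fun _ : EuclideanSpace ℝ (Fin n) => (0:ℝ) := funext fun x' => S8.G1_zero x'
    simp only [he, iteratedFDeriv_zero_fun, Pi.zero_apply]
  have z2 : (fun s : ℝ => iteratedFDeriv ℝ j (fun x' => S8.G2 ξ η (x', s)) x) 0 = 0 := by
    have he : (fun x' => S8.G2 ξ η (x', (0:ℝ))) =
        fun _ : EuclideanSpace ℝ (Fin n) => (0:ℝ) := funext fun x' => S8.G2_zero x'
    simp only [he, iteratedFDeriv_zero_fun, Pi.zero_apply]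
  have hb3 : ∀ t : ℝ, |t| ≤ 1 →
      ‖iteratedFDeriv ℝ j (fun x' => S8.G3 ξ η (x', t)) x‖ ≤ M * |t| ^ 0 := by
    intro t ht
    simpa using hM t ht j hjk x
  have b2 : ∀ t : ℝ, |t| ≤ 1 →
      ‖iteratedFDeriv ℝ j (fun x' => S8.G2 ξ η (x', t)) x‖ ≤ M * |t| ^ 1 := by
    intro t ht
    have := poly_bound hd2 z2 0 hb3 t ht
    norm_num at this ⊢
    exact this
  have b1 : ∀ t : ℝ, |t| ≤ 1 →
      ‖iteratedFDeriv ℝ j (fun x' => S8.G1 ξ η (x', t)) x‖ ≤ M / 2 * |t| ^ 2 := by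
    intro t ht
    have := poly_bound hd1 z1 1 b2 t ht
    norm_num at this ⊢
    exact this
  have b0 := poly_bound hd0 z0 2 b1 h hh
  have hgoal : (fun x' => ξ (x' + h • η x') - ξ (x' - h • η x')
      - 2 * h * fderiv ℝ ξ x' (η x')) = fun x' => S8.Gf ξ η (x', h) := rfl
  rw [hgoal]
  refine b0.trans ?_
  have h3 : (0:ℝ) ≤ |h| ^ 3 := by positivity
  push_cast
  norm_num
  nlinarith [mul_nonneg hM0 h3]
end

section
/- Let f : ℝ^{n_x} × ℝ^{n_y} → ℝ^{n_x} be smooth with all derivatives up to order k+1 bounded. Suppose y₀, y₁ : ℝ^{n_x} → ℝ^{n_y} are C^{k+1} with ∇y_i ∈ W^{k,∞} and y₁ − y₀ bounded. Then ‖∇y₁(·) f(·, y₁(·)) − ∇y₀(·) f(·, y₀(·))‖_{k,∞} ≲ ‖y₁ − y₀‖_{k+1,∞}, where the implicit constant depends on f, k and ‖∇y_i‖_{k,∞}. -/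
open Finset

private lemma exists_uniform_bound {α : Type*} (g : ℕ → α → ℝ) (n : ℕ)
    (h : ∀ j ≤ n, ∃ B, ∀ p, g j p ≤ B) :
    ∃ B, 0 ≤ B ∧ ∀ j ≤ n, ∀ p, g j p ≤ B := by
  induction n with
  | zero =>
    obtain ⟨B, hB⟩ := h 0 le_rfl
    exact ⟨max B 0, le_max_right _ _, fun j hj p => by
      interval_cases j
      exact (hB p).trans (le_max_left _ _)⟩
  | succ n ih =>
    obtain ⟨B₁, hB₁0, hB₁⟩ := ih fun j hj => h j (hj.trans (Nat.le_succ n))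
    obtain ⟨B₂, hB₂⟩ := h (n + 1) le_rfl
    refine ⟨max B₁ B₂, hB₁0.trans (le_max_left _ _), fun j hj p => ?_⟩
    rcases Nat.lt_succ_iff_lt_or_eq.mp (Nat.lt_succ_of_le hj) with h' | h'
    · exact (hB₁ j (Nat.lt_succ_iff.mp h') p).trans (le_max_left _ _)
    · subst h'; exact (hB₂ p).trans (le_max_right _ _)



private lemma key_lipschitz {X P : Type} [NormedAddCommGroup X] [NormedSpace ℝ X]
    [NormedAddCommGroup P] [NormedSpace ℝ P]
    (m : ℕ) (B R' : ℝ) (hB : 0 ≤ B) (hR' : 1 ≤ R') :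
    ∀ j, j ≤ m → ∃ C, 0 ≤ C ∧
      ∀ (Z : Type) [NormedAddCommGroup Z] [NormedSpace ℝ Z],
      ∀ (G : P → Z) (u v : X → P) (D : ℝ),
        ContDiff ℝ (⊤ : ℕ∞) G → ContDiff ℝ (m + 1 : ℕ) u → ContDiff ℝ (m + 1 : ℕ) v →
        (∀ i, i ≤ j + 1 → ∀ p, ‖iteratedFDeriv ℝ i G p‖ ≤ B) →
        (∀ i, 1 ≤ i → i ≤ m + 1 → ∀ x, ‖iteratedFDeriv ℝ i u x‖ ≤ R') →
        (∀ i, 1 ≤ i → i ≤ m + 1 → ∀ x, ‖iteratedFDeriv ℝ i v x‖ ≤ R') →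
        (∀ i, i ≤ m + 1 → ∀ x, ‖iteratedFDeriv ℝ i (fun x' => u x' - v x') x‖ ≤ D) →
        ∀ i, i ≤ j → ∀ x, ‖iteratedFDeriv ℝ i (fun x' => G (u x') - G (v x')) x‖ ≤ C * D := by
  intro j
  induction j with
  | zero =>
    intro _
    refine ⟨B, hB, ?_⟩
    intro Z _ _ G u v D hG hu hv hGb hub hvb hd i hi x
    interval_cases i
    rw [norm_iteratedFDeriv_zero]
    have h1 : ‖G (u x) - G (v x)‖ ≤ B * ‖u x - v x‖ := by
      refine Convex.norm_image_sub_le_of_norm_fderiv_le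
        (fun p _ => (hG.differentiable (by simp)).differentiableAt)
        (fun p _ => ?_) convex_univ (Set.mem_univ _) (Set.mem_univ _)
      have : ‖fderiv ℝ G p‖ = ‖iteratedFDeriv ℝ 1 G p‖ := by
        rw [← norm_iteratedFDeriv_fderiv, norm_iteratedFDeriv_zero]
      rw [this]
      exact hGb 1 le_rfl p
    refine h1.trans ?_
    have h2 : ‖u x - v x‖ ≤ D := by
      have := hd 0 (Nat.zero_le _) x
      rwa [norm_iteratedFDeriv_zero] at this
    exact mul_le_mul_of_nonneg_left h2 hB
  | succ j ih =>
    intro hjm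
    obtain ⟨C, hC0, hC⟩ := ih (by omega)
    refine ⟨max C (2 ^ j * C * R' + 2 ^ j * (j.factorial * B * R' ^ j)),
      le_max_of_le_left hC0, ?_⟩
    intro Z _ _ G u v D hG hu hv hGb hub hvb hd i hi x
    have hD0 : 0 ≤ D := le_trans (norm_nonneg _) (hd 0 (Nat.zero_le _) x)
    rcases Nat.lt_succ_iff_lt_or_eq.mp (Nat.lt_succ_of_le hi) with h' | h'
    · -- lower order: use IH
      refine (hC Z G u v D hG hu hv (fun i hi p => hGb i (by omega) p) hub hvb hd i
        (by omega) x).trans ?_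
      exact mul_le_mul_of_nonneg_right (le_max_left _ _) hD0
    · subst h'
      -- order j+1 : differentiate once
      have hud : Differentiable ℝ u := hu.differentiable (by simp)
      have hvd : Differentiable ℝ v := hv.differentiable (by simp)
      have hGd : Differentiable ℝ G := hG.differentiable (by simp)
      have hfd : fderiv ℝ (fun x' => G (u x') - G (v x')) =
          fun x' => (ContinuousLinearMap.compL ℝ X P Z)
              ((fun x'' => fderiv ℝ G (u x'') - fderiv ℝ G (v x'')) x') (fderiv ℝ u x') +
            (ContinuousLinearMap.compL ℝ X P Z) (fderiv ℝ G (v x'))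
              (fderiv ℝ (fun x'' => u x'' - v x'') x') := by
        funext x'
        have h1 : fderiv ℝ (fun x' => G (u x')) x' =
            (fderiv ℝ G (u x')).comp (fderiv ℝ u x') :=
          fderiv_comp x' (hGd _) (hud _)
        have h2 : fderiv ℝ (fun x' => G (v x')) x' =
            (fderiv ℝ G (v x')).comp (fderiv ℝ v x') :=
          fderiv_comp x' (hGd _) (hvd _)
        have du1 : DifferentiableAt ℝ (fun x' => G (u x')) x' := (hGd _).comp x' (hud _)
        have dv1 : DifferentiableAt ℝ (fun x' => G (v x')) x' := (hGd _).comp x' (hvd _)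
        rw [fderiv_fun_sub du1 dv1, h1, h2, fderiv_fun_sub (hud _) (hvd _)]
        simp only [ContinuousLinearMap.compL_apply]
        ext w
        simp [ContinuousLinearMap.sub_comp, ContinuousLinearMap.comp_sub]
      rw [← norm_iteratedFDeriv_fderiv, hfd]
      -- smoothness facts
      have hDG : ContDiff ℝ (⊤ : ℕ∞) (fderiv ℝ G) := hG.fderiv_right (by exact_mod_cast le_top)
      have hcj : ((j : ℕ) : WithTop ℕ∞) ≤ ((m + 1 : ℕ) : WithTop ℕ∞) := by
        exact_mod_cast (by omega : j ≤ m + 1)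
      have huj : ContDiff ℝ (j : ℕ) u := hu.of_le hcj
      have hvj : ContDiff ℝ (j : ℕ) v := hv.of_le hcj
      have hf₁c : ContDiff ℝ (j : ℕ)
          (fun x'' => fderiv ℝ G (u x'') - fderiv ℝ G (v x'')) :=
        ((hDG.of_le (by exact_mod_cast le_top)).comp huj).sub ((hDG.of_le (by exact_mod_cast le_top)).comp hvj)
      have hDu : ContDiff ℝ (j : ℕ) (fderiv ℝ u) :=
        hu.fderiv_right (by exact_mod_cast (by omega : j + 1 ≤ m + 1))
      have hDGv : ContDiff ℝ (j : ℕ) (fun x' => fderiv ℝ G (v x')) :=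
        (hDG.of_le (by exact_mod_cast le_top)).comp hvj
      have hDuv : ContDiff ℝ (j : ℕ) (fderiv ℝ (fun x'' => u x'' - v x'')) :=
        (hu.sub hv).fderiv_right (by exact_mod_cast (by omega : j + 1 ≤ m + 1))
      have hcompL : ContDiff ℝ (j : ℕ) (ContinuousLinearMap.compL ℝ X P Z) :=
        by fun_prop
      have hT1c : ContDiff ℝ (j : ℕ) (fun x' => (ContinuousLinearMap.compL ℝ X P Z)
          ((fun x'' => fderiv ℝ G (u x'') - fderiv ℝ G (v x'')) x') (fderiv ℝ u x')) :=
        (hcompL.comp hf₁c).clm_apply hDu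
      have hT2c : ContDiff ℝ (j : ℕ) (fun x' => (ContinuousLinearMap.compL ℝ X P Z)
          (fderiv ℝ G (v x')) (fderiv ℝ (fun x'' => u x'' - v x'') x')) :=
        (hcompL.comp hDGv).clm_apply hDuv
      rw [iteratedFDeriv_add_apply' hT1c.contDiffAt hT2c.contDiffAt]
      refine (norm_add_le _ _).trans ?_
      -- bound term 1
      have hb1 := (ContinuousLinearMap.compL ℝ X P Z).norm_iteratedFDeriv_le_of_bilinear_of_le_one
        hf₁c hDu x (le_refl ((j : ℕ) : WithTop ℕ∞)) (ContinuousLinearMap.norm_compL_le ℝ X P Z)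
      have hb2 := (ContinuousLinearMap.compL ℝ X P Z).norm_iteratedFDeriv_le_of_bilinear_of_le_one
        hDGv hDuv x (le_refl ((j : ℕ) : WithTop ℕ∞)) (ContinuousLinearMap.norm_compL_le ℝ X P Z)
      -- termwise estimates
      have hIH : ∀ i ≤ j,
          ‖iteratedFDeriv ℝ i (fun x'' => fderiv ℝ G (u x'') - fderiv ℝ G (v x'')) x‖ ≤ C * D := by
        intro i hi
        refine hC (P →L[ℝ] Z) (fderiv ℝ G) u v D hDG hu hv (fun l hl p => ?_) hub hvb hd i hi x
        rw [norm_iteratedFDeriv_fderiv]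
        exact hGb (l + 1) (by omega) p
      have hDub : ∀ i ≤ j, ‖iteratedFDeriv ℝ i (fderiv ℝ u) x‖ ≤ R' := by
        intro i hi
        rw [norm_iteratedFDeriv_fderiv]
        exact hub (i + 1) (by omega) (by omega) x
      have hDuvb : ∀ i ≤ j,
          ‖iteratedFDeriv ℝ i (fderiv ℝ (fun x'' => u x'' - v x'')) x‖ ≤ D := by
        intro i hi
        rw [norm_iteratedFDeriv_fderiv]
        exact hd (i + 1) (by omega) x
      have hDGvb : ∀ i ≤ j,
          ‖iteratedFDeriv ℝ i (fun x' => fderiv ℝ G (v x')) x‖ ≤ j.factorial * B * R' ^ j := by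
        intro i hi
        have heq : (fun x' => fderiv ℝ G (v x')) = (fderiv ℝ G) ∘ v := rfl
        rw [heq]
        have h1 : ‖iteratedFDeriv ℝ i ((fderiv ℝ G) ∘ v) x‖ ≤ i.factorial * B * R' ^ i := by
          refine norm_iteratedFDeriv_comp_le (hDG.of_le (by exact_mod_cast le_top)) hv
            (by exact_mod_cast (by omega : i ≤ m + 1)) x (fun l hl => ?_) (fun l hl1 hl2 => ?_)
          · rw [norm_iteratedFDeriv_fderiv]
            exact hGb (l + 1) (by omega) _
          · calc ‖iteratedFDeriv ℝ l v x‖ ≤ R' := hvb l hl1 (by omega) x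
              _ ≤ R' ^ l := le_self_pow₀ hR' (by omega)
        refine h1.trans ?_
        have h3 : (i.factorial : ℝ) ≤ j.factorial := by exact_mod_cast Nat.factorial_le hi
        have h4 : R' ^ i ≤ R' ^ j := pow_le_pow_right₀ hR' hi
        have h5 : (0:ℝ) ≤ R' ^ i := pow_nonneg (by linarith) i
        have s1 : (i.factorial : ℝ) * B * R' ^ i ≤ (j.factorial : ℝ) * B * R' ^ i :=
          mul_le_mul_of_nonneg_right (mul_le_mul_of_nonneg_right h3 hB) h5
        have s2 : (j.factorial : ℝ) * B * R' ^ i ≤ (j.factorial : ℝ) * B * R' ^ j :=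
          mul_le_mul_of_nonneg_left h4 (mul_nonneg (Nat.cast_nonneg _) hB)
        exact s1.trans s2
      have hsum : ∑ i ∈ range (j + 1), (j.choose i : ℝ) = 2 ^ j := by
        exact_mod_cast Nat.sum_range_choose j
      have hCD : 0 ≤ C * D := mul_nonneg hC0 hD0
      have e1 : ∑ i ∈ range (j + 1),
          (j.choose i : ℝ) * ‖iteratedFDeriv ℝ i
            (fun x'' => fderiv ℝ G (u x'') - fderiv ℝ G (v x'')) x‖ *
            ‖iteratedFDeriv ℝ (j - i) (fderiv ℝ u) x‖ ≤ 2 ^ j * C * R' * D := by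
        calc ∑ i ∈ range (j + 1),
            (j.choose i : ℝ) * ‖iteratedFDeriv ℝ i
              (fun x'' => fderiv ℝ G (u x'') - fderiv ℝ G (v x'')) x‖ *
              ‖iteratedFDeriv ℝ (j - i) (fderiv ℝ u) x‖
            ≤ ∑ i ∈ range (j + 1), (j.choose i : ℝ) * (C * D * R') := by
              refine sum_le_sum fun i hi' => ?_
              have hij : i ≤ j := by
                have := Finset.mem_range.mp hi'; omega
              rw [mul_assoc]
              refine mul_le_mul_of_nonneg_left ?_ (by positivity)
              exact mul_le_mul (hIH i hij) (hDub (j - i) (by omega)) (norm_nonneg _) hCD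
          _ = 2 ^ j * C * R' * D := by rw [← sum_mul, hsum]; ring
      have e2 : ∑ i ∈ range (j + 1),
          (j.choose i : ℝ) * ‖iteratedFDeriv ℝ i (fun x' => fderiv ℝ G (v x')) x‖ *
            ‖iteratedFDeriv ℝ (j - i) (fderiv ℝ fun x'' => u x'' - v x'') x‖ ≤
            2 ^ j * ((j.factorial : ℝ) * B * R' ^ j) * D := by
        calc ∑ i ∈ range (j + 1),
            (j.choose i : ℝ) * ‖iteratedFDeriv ℝ i (fun x' => fderiv ℝ G (v x')) x‖ *
              ‖iteratedFDeriv ℝ (j - i) (fderiv ℝ fun x'' => u x'' - v x'') x‖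
            ≤ ∑ i ∈ range (j + 1), (j.choose i : ℝ) * ((j.factorial : ℝ) * B * R' ^ j * D) := by
              refine sum_le_sum fun i hi' => ?_
              have hij : i ≤ j := by
                have := Finset.mem_range.mp hi'; omega
              rw [mul_assoc]
              refine mul_le_mul_of_nonneg_left ?_ (by positivity)
              refine mul_le_mul (hDGvb i hij) (hDuvb (j - i) (by omega)) (norm_nonneg _) ?_
              exact mul_nonneg (mul_nonneg (Nat.cast_nonneg _) hB)
                (pow_nonneg (by linarith) j)
          _ = 2 ^ j * ((j.factorial : ℝ) * B * R' ^ j) * D := by rw [← sum_mul, hsum]; ring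
      refine le_trans (add_le_add (hb1.trans e1) (hb2.trans e2)) ?_
      have hmx := mul_le_mul_of_nonneg_right
        (le_max_right C (2 ^ j * C * R' + 2 ^ j * ((j.factorial : ℝ) * B * R' ^ j))) hD0
      linarith [hmx]


section helpers

variable {X W : Type} [NormedAddCommGroup X] [NormedSpace ℝ X]
  [NormedAddCommGroup W] [NormedSpace ℝ W]

private lemma clm_iFD_bound (e : X →L[ℝ] W) (i : ℕ) (hi : 1 ≤ i) (x : X) :
    ‖iteratedFDeriv ℝ i (⇑e) x‖ ≤ ‖e‖ := by
  obtain ⟨i', rfl⟩ : ∃ i', i = i' + 1 := ⟨i - 1, by omega⟩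
  rw [← norm_iteratedFDeriv_fderiv]
  have h2 : fderiv ℝ (⇑e) = fun _ => e := funext fun z => e.fderiv
  rw [h2]
  rcases Nat.eq_zero_or_pos i' with h | h
  · subst h; rw [norm_iteratedFDeriv_zero]
  · rw [iteratedFDeriv_const_of_ne (by omega)]
    simpa using norm_nonneg e

private lemma norm_inl_le' : ‖ContinuousLinearMap.inl ℝ X W‖ ≤ 1 := by
  refine ContinuousLinearMap.opNorm_le_bound _ zero_le_one fun z => ?_
  simp [Prod.norm_def, norm_nonneg]

private lemma norm_inr_le' : ‖ContinuousLinearMap.inr ℝ X W‖ ≤ 1 := by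
  refine ContinuousLinearMap.opNorm_le_bound _ zero_le_one fun z => ?_
  simp [Prod.norm_def, norm_nonneg]

private lemma inr_comp_iFD_bound {n : ℕ} {w : X → W} (hw : ContDiff ℝ (n : ℕ) w)
    (i : ℕ) (hi : i ≤ n) (x : X) :
    ‖iteratedFDeriv ℝ i (fun x' => ContinuousLinearMap.inr ℝ X W (w x')) x‖ ≤
      ‖iteratedFDeriv ℝ i w x‖ := by
  have heq : (fun x' => ContinuousLinearMap.inr ℝ X W (w x')) =
      (⇑(ContinuousLinearMap.inr ℝ X W)) ∘ w := rfl
  rw [heq, ContinuousLinearMap.iteratedFDeriv_comp_left _ hw.contDiffAt (by exact_mod_cast hi)]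
  refine (ContinuousLinearMap.norm_compContinuousMultilinearMap_le _ _).trans ?_
  calc ‖ContinuousLinearMap.inr ℝ X W‖ * ‖iteratedFDeriv ℝ i w x‖
      ≤ 1 * ‖iteratedFDeriv ℝ i w x‖ :=
        mul_le_mul_of_nonneg_right norm_inr_le' (norm_nonneg _)
    _ = _ := one_mul _

private lemma pair_iFD_bound {n : ℕ} {y : X → W} (hy : ContDiff ℝ (n + 1 : ℕ) y) (R : ℝ)
    (hyb : ∀ i, 1 ≤ i → i ≤ n + 1 → ∀ x, ‖iteratedFDeriv ℝ i y x‖ ≤ R) :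
    ∀ i, 1 ≤ i → i ≤ n + 1 → ∀ x, ‖iteratedFDeriv ℝ i (fun x' => (x', y x')) x‖ ≤ R + 1 := by
  intro i hi1 hi2 x
  have heq : (fun x' : X => (x', y x')) = fun x' =>
      (⇑(ContinuousLinearMap.inl ℝ X W)) x' + (fun x'' => ContinuousLinearMap.inr ℝ X W (y x'')) x' := by
    funext x'; simp
  have hf' : ContDiff ℝ (i : ℕ) (fun x' : X => (ContinuousLinearMap.inl ℝ X W) x') :=
    (ContinuousLinearMap.inl ℝ X W).contDiff
  have hg' : ContDiff ℝ (i : ℕ) (fun x'' : X => ContinuousLinearMap.inr ℝ X W (y x'')) :=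
    ((ContinuousLinearMap.inr ℝ X W).contDiff).comp (hy.of_le (by exact_mod_cast hi2))
  rw [heq, iteratedFDeriv_add_apply' hf'.contDiffAt hg'.contDiffAt]
  refine (norm_add_le _ _).trans ?_
  have h1 : ‖iteratedFDeriv ℝ i (fun x' : X => (ContinuousLinearMap.inl ℝ X W) x') x‖ ≤ 1 :=
    (clm_iFD_bound _ i hi1 x).trans norm_inl_le'
  have h2 : ‖iteratedFDeriv ℝ i (fun x'' => ContinuousLinearMap.inr ℝ X W (y x'')) x‖ ≤ R := by
    refine (inr_comp_iFD_bound (n := n + 1) (hy.of_le (by exact_mod_cast le_refl (n+1))) i hi2 x).trans ?_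
    exact hyb i hi1 hi2 x
  linarith

end helpers


set_option maxHeartbeats 2000000 in
/-- Lipschitz-type estimate for `y ↦ ∇y(·) f(·,y(·))`: if `f` has bounded derivatives
up to order `k+1`, `y_i ∈ C^{k+1}` with `∇y_i ∈ W^{k,∞}` bounded by `R` and `y₁ - y₀`
bounded, then `‖∇y₁ f(·,y₁) - ∇y₀ f(·,y₀)‖_{k,∞} ≲ ‖y₁ - y₀‖_{k+1,∞}`. -/
theorem stmt_11 (nx ny k : ℕ)
    (f : EuclideanSpace ℝ (Fin nx) → EuclideanSpace ℝ (Fin ny) → EuclideanSpace ℝ (Fin nx))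
    (hf : ContDiff ℝ (⊤ : ℕ∞) (fun p : EuclideanSpace ℝ (Fin nx) × EuclideanSpace ℝ (Fin ny) =>
      f p.1 p.2))
    (hfb : ∀ j ≤ k + 1, ∃ B, ∀ p : EuclideanSpace ℝ (Fin nx) × EuclideanSpace ℝ (Fin ny),
      ‖iteratedFDeriv ℝ j (fun q : EuclideanSpace ℝ (Fin nx) × EuclideanSpace ℝ (Fin ny) =>
        f q.1 q.2) p‖ ≤ B)
    (R : ℝ) (hR : 0 < R) :
    ∃ C > 0, ∀ y₀ y₁ : EuclideanSpace ℝ (Fin nx) → EuclideanSpace ℝ (Fin ny),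
      ContDiff ℝ (k + 1 : ℕ) y₀ → ContDiff ℝ (k + 1 : ℕ) y₁ →
      (∀ j ≤ k, ∀ x, ‖iteratedFDeriv ℝ (j + 1) y₀ x‖ ≤ R) →
      (∀ j ≤ k, ∀ x, ‖iteratedFDeriv ℝ (j + 1) y₁ x‖ ≤ R) →
      ∀ D, (∀ j ≤ k + 1, ∀ x, ‖iteratedFDeriv ℝ j (fun x' => y₁ x' - y₀ x') x‖ ≤ D) →
        ∀ j ≤ k, ∀ x,
          ‖iteratedFDeriv ℝ j
            (fun x' => fderiv ℝ y₁ x' (f x' (y₁ x')) - fderiv ℝ y₀ x' (f x' (y₀ x'))) x‖ ≤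
          C * D := by
  set F : EuclideanSpace ℝ (Fin nx) × EuclideanSpace ℝ (Fin ny) → EuclideanSpace ℝ (Fin nx) :=
    fun p => f p.1 p.2 with hF
  obtain ⟨B, hB0, hBb⟩ := exists_uniform_bound (fun j p => ‖iteratedFDeriv ℝ j F p‖) (k + 1) hfb
  set R' : ℝ := R + 1 with hR'
  have hR'1 : (1 : ℝ) ≤ R' := by simp [hR']; linarith
  obtain ⟨C₀, hC₀0, hkey⟩ := key_lipschitz (X := EuclideanSpace ℝ (Fin nx))
    (P := EuclideanSpace ℝ (Fin nx) × EuclideanSpace ℝ (Fin ny)) k B R' hB0 hR'1 k le_rfl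
  have hFs : ContDiff ℝ (k + 1 : ℕ) F := hf.of_le (by exact_mod_cast le_top)
  have hFt : ContDiff ℝ (⊤ : ℕ∞) F := hf.of_le (by simp)
  set Cg : ℝ := (k.factorial : ℝ) * B * R' ^ k with hCg
  have hCg0 : 0 ≤ Cg := by
    have : (0:ℝ) ≤ R' ^ k := pow_nonneg (by linarith) k
    have : (0:ℝ) ≤ (k.factorial : ℝ) := Nat.cast_nonneg _
    positivity
  refine ⟨2 ^ k * Cg + 2 ^ k * R * C₀ + 1, by positivity, ?_⟩
  intro y₀ y₁ hy₀ hy₁ hb₀ hb₁ D hD j hj x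
  have hD0 : 0 ≤ D := (norm_nonneg _).trans (hD 0 (by omega) x)
  -- smoothness of pair maps
  have hu₁ : ContDiff ℝ (k + 1 : ℕ) (fun x' : EuclideanSpace ℝ (Fin nx) => (x', y₁ x')) := contDiff_id.prodMk hy₁
  have hu₀ : ContDiff ℝ (k + 1 : ℕ) (fun x' : EuclideanSpace ℝ (Fin nx) => (x', y₀ x')) := contDiff_id.prodMk hy₀
  -- derivative bounds for y's in convenient form
  have hyb₁ : ∀ i, 1 ≤ i → i ≤ k + 1 → ∀ x, ‖iteratedFDeriv ℝ i y₁ x‖ ≤ R := by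
    intro i h1 h2 x
    have := hb₁ (i - 1) (by omega) x
    rwa [show i - 1 + 1 = i by omega] at this
  have hyb₀ : ∀ i, 1 ≤ i → i ≤ k + 1 → ∀ x, ‖iteratedFDeriv ℝ i y₀ x‖ ≤ R := by
    intro i h1 h2 x
    have := hb₀ (i - 1) (by omega) x
    rwa [show i - 1 + 1 = i by omega] at this
  have hub₁ : ∀ i, 1 ≤ i → i ≤ k + 1 → ∀ x,
      ‖iteratedFDeriv ℝ i (fun x' : EuclideanSpace ℝ (Fin nx) => (x', y₁ x')) x‖ ≤ R' :=
    pair_iFD_bound hy₁ R hyb₁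
  have hub₀ : ∀ i, 1 ≤ i → i ≤ k + 1 → ∀ x,
      ‖iteratedFDeriv ℝ i (fun x' : EuclideanSpace ℝ (Fin nx) => (x', y₀ x')) x‖ ≤ R' :=
    pair_iFD_bound hy₀ R hyb₀
  -- difference of pair maps
  have hd' : ∀ i ≤ k + 1, ∀ x,
      ‖iteratedFDeriv ℝ i (fun x' : EuclideanSpace ℝ (Fin nx) => ((x', y₁ x') : EuclideanSpace ℝ (Fin nx) × EuclideanSpace ℝ (Fin ny)) - (x', y₀ x')) x‖ ≤ D := by
    intro i hi x
    have heq : (fun x' : EuclideanSpace ℝ (Fin nx) => ((x', y₁ x') : EuclideanSpace ℝ (Fin nx) × EuclideanSpace ℝ (Fin ny)) - (x', y₀ x')) =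
        fun x' => ContinuousLinearMap.inr ℝ (EuclideanSpace ℝ (Fin nx)) (EuclideanSpace ℝ (Fin ny)) ((fun x'' => y₁ x'' - y₀ x'') x') := by
      funext x'
      simp [Prod.ext_iff]
    rw [heq]
    exact (inr_comp_iFD_bound (n := k + 1) (hy₁.sub hy₀) i hi x).trans (hD i hi x)
  -- key estimate for the composed difference
  have hg10 : ∀ i ≤ k, ∀ x,
      ‖iteratedFDeriv ℝ i (fun x' : EuclideanSpace ℝ (Fin nx) => F ((x', y₁ x')) - F ((x', y₀ x'))) x‖ ≤ C₀ * D := by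
    intro i hi x
    exact hkey (EuclideanSpace ℝ (Fin nx)) F (fun x' => (x', y₁ x')) (fun x' => (x', y₀ x')) D hFt hu₁ hu₀
      (fun i hi p => hBb i hi p) hub₁ hub₀ hd' i hi x
  -- uniform bound on iterated derivatives of x ↦ f x (y₁ x)
  have hcomp₁ : ∀ l ≤ k, ∀ x, ‖iteratedFDeriv ℝ l (fun x' : EuclideanSpace ℝ (Fin nx) => f x' (y₁ x')) x‖ ≤ Cg := by
    intro l hl x
    have heqc : (fun x' : EuclideanSpace ℝ (Fin nx) => f x' (y₁ x')) = F ∘ (fun x' : EuclideanSpace ℝ (Fin nx) => (x', y₁ x')) := rfl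
    rw [heqc]
    have h1 : ‖iteratedFDeriv ℝ l (F ∘ fun x' : EuclideanSpace ℝ (Fin nx) => (x', y₁ x')) x‖ ≤
        (l.factorial : ℝ) * B * R' ^ l := by
      refine norm_iteratedFDeriv_comp_le hFs hu₁ (by exact_mod_cast (by omega : l ≤ k + 1)) x
        (fun i hi => hBb i (by omega) _) (fun i hi1 hi2 => ?_)
      exact (hub₁ i hi1 (by omega) x).trans (le_self_pow₀ (by linarith) (by omega))
    refine h1.trans ?_
    have h3 : (l.factorial : ℝ) ≤ k.factorial := by exact_mod_cast Nat.factorial_le hl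
    have h4 : R' ^ l ≤ R' ^ k := pow_le_pow_right₀ hR'1 hl
    have h5 : (0:ℝ) ≤ R' ^ l := pow_nonneg (by linarith) l
    have s1 : (l.factorial : ℝ) * B * R' ^ l ≤ (k.factorial : ℝ) * B * R' ^ l :=
      mul_le_mul_of_nonneg_right (mul_le_mul_of_nonneg_right h3 hB0) h5
    have s2 : (k.factorial : ℝ) * B * R' ^ l ≤ (k.factorial : ℝ) * B * R' ^ k :=
      mul_le_mul_of_nonneg_left h4 (mul_nonneg (Nat.cast_nonneg _) hB0)
    exact s1.trans s2
  -- split the target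
  have hy₁d : Differentiable ℝ y₁ := hy₁.differentiable (by simp)
  have hy₀d : Differentiable ℝ y₀ := hy₀.differentiable (by simp)
  have hsplit : (fun x' : EuclideanSpace ℝ (Fin nx) => fderiv ℝ y₁ x' (f x' (y₁ x')) - fderiv ℝ y₀ x' (f x' (y₀ x'))) =
      fun x' => (fderiv ℝ y₁ x' - fderiv ℝ y₀ x') (f x' (y₁ x')) +
        (fderiv ℝ y₀ x') (f x' (y₁ x') - f x' (y₀ x')) := by
    funext x'
    simp only [ContinuousLinearMap.sub_apply, map_sub]
    abel
  -- smoothness of the two summands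
  have hjk1 : ((j : ℕ) : WithTop ℕ∞) ≤ ((k + 1 : ℕ) : WithTop ℕ∞) := by
    exact_mod_cast (by omega : j ≤ k + 1)
  have hDy₁ : ContDiff ℝ (j : ℕ) (fderiv ℝ y₁) :=
    hy₁.fderiv_right (by exact_mod_cast (by omega : j + 1 ≤ k + 1))
  have hDy₀ : ContDiff ℝ (j : ℕ) (fderiv ℝ y₀) :=
    hy₀.fderiv_right (by exact_mod_cast (by omega : j + 1 ≤ k + 1))
  have hgc₁ : ContDiff ℝ (k + 1 : ℕ) (fun x' : EuclideanSpace ℝ (Fin nx) => f x' (y₁ x')) := hFs.comp hu₁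
  have hgc₀ : ContDiff ℝ (k + 1 : ℕ) (fun x' : EuclideanSpace ℝ (Fin nx) => f x' (y₀ x')) := hFs.comp hu₀
  have hA : ContDiff ℝ (j : ℕ)
      (fun x' : EuclideanSpace ℝ (Fin nx) => (fderiv ℝ y₁ x' - fderiv ℝ y₀ x') (f x' (y₁ x'))) :=
    (hDy₁.sub hDy₀).clm_apply (hgc₁.of_le hjk1)
  have hBt : ContDiff ℝ (j : ℕ)
      (fun x' : EuclideanSpace ℝ (Fin nx) => (fderiv ℝ y₀ x') (f x' (y₁ x') - f x' (y₀ x'))) :=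
    hDy₀.clm_apply ((hgc₁.of_le hjk1).sub (hgc₀.of_le hjk1))
  rw [hsplit, iteratedFDeriv_add_apply' hA.contDiffAt hBt.contDiffAt]
  refine (norm_add_le _ _).trans ?_
  -- estimate for the first summand
  have ha := norm_iteratedFDeriv_clm_apply (f := fun x' : EuclideanSpace ℝ (Fin nx) => fderiv ℝ y₁ x' - fderiv ℝ y₀ x')
    (g := fun x' : EuclideanSpace ℝ (Fin nx) => f x' (y₁ x')) (hDy₁.sub hDy₀) (hgc₁.of_le hjk1) x
    (le_refl ((j : ℕ) : WithTop ℕ∞))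
  have hdf : (fun x' : EuclideanSpace ℝ (Fin nx) => fderiv ℝ y₁ x' - fderiv ℝ y₀ x') =
      fderiv ℝ (fun x' => y₁ x' - y₀ x') := by
    funext x'
    exact (fderiv_fun_sub (hy₁d x') (hy₀d x')).symm
  have e1 : ∑ i ∈ range (j + 1), (j.choose i : ℝ) *
      ‖iteratedFDeriv ℝ i (fun x' : EuclideanSpace ℝ (Fin nx) => fderiv ℝ y₁ x' - fderiv ℝ y₀ x') x‖ *
      ‖iteratedFDeriv ℝ (j - i) (fun x' : EuclideanSpace ℝ (Fin nx) => f x' (y₁ x')) x‖ ≤ 2 ^ k * Cg * D := by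
    have hsum : ∑ i ∈ range (j + 1), (j.choose i : ℝ) = 2 ^ j := by
      exact_mod_cast Nat.sum_range_choose j
    calc ∑ i ∈ range (j + 1), (j.choose i : ℝ) *
        ‖iteratedFDeriv ℝ i (fun x' : EuclideanSpace ℝ (Fin nx) => fderiv ℝ y₁ x' - fderiv ℝ y₀ x') x‖ *
        ‖iteratedFDeriv ℝ (j - i) (fun x' : EuclideanSpace ℝ (Fin nx) => f x' (y₁ x')) x‖
        ≤ ∑ i ∈ range (j + 1), (j.choose i : ℝ) * (D * Cg) := by
          refine sum_le_sum fun i hi' => ?_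
          have hij : i ≤ j := by have := Finset.mem_range.mp hi'; omega
          rw [mul_assoc]
          refine mul_le_mul_of_nonneg_left ?_ (by positivity)
          have hfirst : ‖iteratedFDeriv ℝ i
              (fun x' : EuclideanSpace ℝ (Fin nx) => fderiv ℝ y₁ x' - fderiv ℝ y₀ x') x‖ ≤ D := by
            rw [hdf, norm_iteratedFDeriv_fderiv]
            exact hD (i + 1) (by omega) x
          exact mul_le_mul hfirst (hcomp₁ (j - i) (by omega) x) (norm_nonneg _) hD0
      _ = 2 ^ j * (D * Cg) := by rw [← sum_mul, hsum]
      _ ≤ 2 ^ k * Cg * D := by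
          have h2 : (2:ℝ) ^ j ≤ 2 ^ k := by
            refine pow_le_pow_right₀ one_le_two hj
          nlinarith [mul_nonneg hD0 hCg0]
  -- estimate for the second summand
  have hbp := norm_iteratedFDeriv_clm_apply (f := fderiv ℝ y₀)
    (g := fun x' : EuclideanSpace ℝ (Fin nx) => f x' (y₁ x') - f x' (y₀ x')) hDy₀
    ((hgc₁.of_le hjk1).sub (hgc₀.of_le hjk1)) x (le_refl ((j : ℕ) : WithTop ℕ∞))
  have e2 : ∑ i ∈ range (j + 1), (j.choose i : ℝ) *
      ‖iteratedFDeriv ℝ i (fderiv ℝ y₀) x‖ *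
      ‖iteratedFDeriv ℝ (j - i) (fun x' : EuclideanSpace ℝ (Fin nx) => f x' (y₁ x') - f x' (y₀ x')) x‖ ≤
      2 ^ k * R * C₀ * D := by
    have hsum : ∑ i ∈ range (j + 1), (j.choose i : ℝ) = 2 ^ j := by
      exact_mod_cast Nat.sum_range_choose j
    calc ∑ i ∈ range (j + 1), (j.choose i : ℝ) *
        ‖iteratedFDeriv ℝ i (fderiv ℝ y₀) x‖ *
        ‖iteratedFDeriv ℝ (j - i) (fun x' : EuclideanSpace ℝ (Fin nx) => f x' (y₁ x') - f x' (y₀ x')) x‖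
        ≤ ∑ i ∈ range (j + 1), (j.choose i : ℝ) * (R * (C₀ * D)) := by
          refine sum_le_sum fun i hi' => ?_
          have hij : i ≤ j := by have := Finset.mem_range.mp hi'; omega
          rw [mul_assoc]
          refine mul_le_mul_of_nonneg_left ?_ (by positivity)
          have hfirst : ‖iteratedFDeriv ℝ i (fderiv ℝ y₀) x‖ ≤ R := by
            rw [norm_iteratedFDeriv_fderiv]
            exact hb₀ i (by omega) x
          have hsecond : ‖iteratedFDeriv ℝ (j - i)
              (fun x' : EuclideanSpace ℝ (Fin nx) => f x' (y₁ x') - f x' (y₀ x')) x‖ ≤ C₀ * D :=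
            hg10 (j - i) (by omega) x
          exact mul_le_mul hfirst hsecond (norm_nonneg _) hR.le
      _ = 2 ^ j * (R * (C₀ * D)) := by rw [← sum_mul, hsum]
      _ ≤ 2 ^ k * R * C₀ * D := by
          have h2 : (2:ℝ) ^ j ≤ 2 ^ k := pow_le_pow_right₀ one_le_two hj
          nlinarith [mul_nonneg (mul_nonneg hR.le hC₀0) hD0]
  refine le_trans (add_le_add (ha.trans e1) (hbp.trans e2)) ?_
  nlinarith [mul_nonneg hD0 hCg0]
end

section
/- Consider the slow-fast system dx/dt = f(x,y), ε dy/dt = g(x,y) with g β-strongly monotone in y and f, g, and the slow manifold γ (defined by g(x,γ(x)) = 0) smooth with bounded derivatives. Let Γ₀(x,ε) = γ(x), and define Γ₁(x,ε) as the unique solution of g(x, Γ₁(x,ε)) = ε ∇γ(x) f(x, γ(x)). Let γ₁(x) = G_y(x)⁻¹ ∇γ(x) f(x, γ(x)) where G_y(x) = ∂g/∂y(x, γ(x)). Then sup_x |Γ₁(x,ε) − γ(x) − ε γ₁(x)| ≤ (C₁/β) ε² for some constant C₁ and all sufficiently small ε > 0. -/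
open Filter Topology

/-- Strong monotonicity implies an inverse Lipschitz estimate. -/
lemma aux_mono_dist {F : Type*} [NormedAddCommGroup F] [InnerProductSpace ℝ F]
    {β : ℝ} (hβ : 0 < β) {y₁ y₂ u₁ u₂ : F}
    (h : (inner ℝ (y₁ - y₂) (u₁ - u₂) : ℝ) ≤ -β * ‖y₁ - y₂‖ ^ 2) :
    ‖y₁ - y₂‖ ≤ β⁻¹ * ‖u₁ - u₂‖ := by
  have h1 : β * ‖y₁ - y₂‖ ^ 2 ≤ (inner ℝ (y₁ - y₂) (u₂ - u₁) : ℝ) := by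
    have : (inner ℝ (y₁ - y₂) (u₂ - u₁) : ℝ) = -(inner ℝ (y₁ - y₂) (u₁ - u₂) : ℝ) := by
      rw [← inner_neg_right]; congr 1; abel
    rw [this]; linarith
  have h2 : (inner ℝ (y₁ - y₂) (u₂ - u₁) : ℝ) ≤ ‖y₁ - y₂‖ * ‖u₂ - u₁‖ := real_inner_le_norm _ _
  have h3 : ‖u₂ - u₁‖ = ‖u₁ - u₂‖ := norm_sub_rev _ _
  rcases eq_or_lt_of_le (norm_nonneg (y₁ - y₂)) with h4 | h4
  · rw [← h4]; positivity
  · rw [h3] at h2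
    have h5 : β * ‖y₁ - y₂‖ ≤ ‖u₁ - u₂‖ := by nlinarith
    calc ‖y₁ - y₂‖ = β⁻¹ * (β * ‖y₁ - y₂‖) := by field_simp
      _ ≤ β⁻¹ * ‖u₁ - u₂‖ := by
          exact mul_le_mul_of_nonneg_left h5 (by positivity)

/-- Strong monotonicity passes to the derivative: `‖v‖ ≤ β⁻¹ ‖D v‖`. -/
lemma aux_mono_deriv {F : Type*} [NormedAddCommGroup F] [InnerProductSpace ℝ F]
    {β : ℝ} (hβ : 0 < β) {g : F → F} {y : F} {D : F →L[ℝ] F}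
    (hD : HasFDerivAt g D y)
    (hm : ∀ y₁ y₂, (inner ℝ (y₁ - y₂) (g y₁ - g y₂) : ℝ) ≤ -β * ‖y₁ - y₂‖ ^ 2)
    (v : F) : ‖v‖ ≤ β⁻¹ * ‖D v‖ := by
  have hkey : (inner ℝ v (D v) : ℝ) ≤ -β * ‖v‖ ^ 2 := by
    have hline : HasDerivAt (fun t : ℝ => g (y + t • v)) (D v) 0 := by
      have h1 : HasDerivAt (fun t : ℝ => y + t • v) v 0 := by
        simpa using ((hasDerivAt_id (0:ℝ)).smul_const v).const_add y
      have hD' : HasFDerivAt g D ((fun t : ℝ => y + t • v) 0) := by simpa using hD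
      exact hD'.comp_hasDerivAt 0 h1
    have hslope : Tendsto (slope (fun t : ℝ => g (y + t • v)) 0) (𝓝[≠] (0:ℝ)) (𝓝 (D v)) :=
      hasDerivAt_iff_tendsto_slope.mp hline
    have hslope' : Tendsto (slope (fun t : ℝ => g (y + t • v)) 0) (𝓝[>] (0:ℝ)) (𝓝 (D v)) :=
      hslope.mono_left (nhdsWithin_mono _ (fun t ht => ne_of_gt ht))
    have htend : Tendsto (fun t : ℝ =>
        (inner ℝ v (slope (fun s : ℝ => g (y + s • v)) 0 t) : ℝ)) (𝓝[>] (0:ℝ))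
        (𝓝 (inner ℝ v (D v) : ℝ)) :=
      (tendsto_const_nhds.inner hslope')
    refine le_of_tendsto htend ?_
    filter_upwards [self_mem_nhdsWithin] with t ht
    have ht0 : (0:ℝ) < t := ht
    have hmt := hm (y + t • v) y
    have h1 : (y + t • v) - y = t • v := by abel
    rw [h1] at hmt
    have h2 : (inner ℝ (t • v) (g (y + t • v) - g y) : ℝ)
        = t * (inner ℝ v (g (y + t • v) - g y) : ℝ) := real_inner_smul_left _ _ _
    have h3 : ‖t • v‖ ^ 2 = t ^ 2 * ‖v‖ ^ 2 := by
      rw [norm_smul, mul_pow, Real.norm_eq_abs, sq_abs]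
    rw [h2, h3] at hmt
    have hs : slope (fun s : ℝ => g (y + s • v)) 0 t = t⁻¹ • (g (y + t • v) - g y) := by
      simp [slope_def_field, slope, vsub_eq_sub]
    rw [hs, real_inner_smul_right]
    have h4 : (inner ℝ v (g (y + t • v) - g y) : ℝ) ≤ -β * (t * ‖v‖ ^ 2) := by
      have := (mul_le_mul_iff_right₀ ht0).mp (by linarith : t * (inner ℝ v (g (y + t • v) - g y) : ℝ) ≤ t * (-β * (t * ‖v‖ ^ 2)))
      exact this
    calc t⁻¹ * (inner ℝ v (g (y + t • v) - g y) : ℝ)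
        ≤ t⁻¹ * (-β * (t * ‖v‖ ^ 2)) := by
          apply mul_le_mul_of_nonneg_left h4 (by positivity)
      _ = -β * ‖v‖ ^ 2 := by field_simp
  -- now conclude as in aux_mono_dist
  have h1 : β * ‖v‖ ^ 2 ≤ (inner ℝ v (-(D v)) : ℝ) := by
    rw [inner_neg_right]; linarith
  have h2 : (inner ℝ v (-(D v)) : ℝ) ≤ ‖v‖ * ‖D v‖ := by
    simpa using real_inner_le_norm v (-(D v))
  rcases eq_or_lt_of_le (norm_nonneg v) with h4 | h4
  · rw [← h4]; positivity
  · have h5 : β * ‖v‖ ≤ ‖D v‖ := by nlinarith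
    calc ‖v‖ = β⁻¹ * (β * ‖v‖) := by field_simp
      _ ≤ β⁻¹ * ‖D v‖ := mul_le_mul_of_nonneg_left h5 (by positivity)

/-- Norm of composing with the right inclusion `w ↦ (0, w)`. -/
lemma aux_comp_inr_norm {E F G : Type*} [NormedAddCommGroup E] [NormedSpace ℝ E]
    [NormedAddCommGroup F] [NormedSpace ℝ F] [NormedAddCommGroup G] [NormedSpace ℝ G]
    (A : E × F →L[ℝ] G) {C : ℝ} (hC : 0 ≤ C) (hA : ‖A‖ ≤ C) :
    ‖A.comp ((0 : F →L[ℝ] E).prod (ContinuousLinearMap.id ℝ F))‖ ≤ C := by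
  refine ContinuousLinearMap.opNorm_le_bound _ hC (fun w => ?_)
  have h1 : (A.comp ((0 : F →L[ℝ] E).prod (ContinuousLinearMap.id ℝ F))) w
      = A (0, w) := rfl
  rw [h1]
  calc ‖A (0, w)‖ ≤ ‖A‖ * ‖((0 : E), w)‖ := A.le_opNorm _
    _ ≤ C * ‖w‖ := by
        have : ‖((0 : E), w)‖ = ‖w‖ := by
          simp [Prod.norm_def]
        rw [this]
        exact mul_le_mul_of_nonneg_right hA (norm_nonneg _)

noncomputable def auxJ (nx ny : ℕ) :
    EuclideanSpace ℝ (Fin ny) →L[ℝ] EuclideanSpace ℝ (Fin nx) × EuclideanSpace ℝ (Fin ny) :=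
  (0 : EuclideanSpace ℝ (Fin ny) →L[ℝ] EuclideanSpace ℝ (Fin nx)).prod
    (ContinuousLinearMap.id ℝ (EuclideanSpace ℝ (Fin ny)))

/-- First-order slow-manifold iteration estimate: with `Γ₁` defined by
`g(x,Γ₁(x,ε)) = ε ∇γ(x) f(x,γ(x))` and `γ₁ = G_y⁻¹ ∇γ f(·,γ)`, one has
`sup_x |Γ₁(x,ε) - γ(x) - ε γ₁(x)| ≤ (C₁/β) ε²` for all small `ε > 0`. -/
theorem stmt_12 (nx ny : ℕ) (β : ℝ) (hβ : 0 < β)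
    (f : EuclideanSpace ℝ (Fin nx) → EuclideanSpace ℝ (Fin ny) → EuclideanSpace ℝ (Fin nx))
    (g : EuclideanSpace ℝ (Fin nx) → EuclideanSpace ℝ (Fin ny) → EuclideanSpace ℝ (Fin ny))
    (γ γ₁ : EuclideanSpace ℝ (Fin nx) → EuclideanSpace ℝ (Fin ny))
    (Γ₁ : EuclideanSpace ℝ (Fin nx) → ℝ → EuclideanSpace ℝ (Fin ny))
    (hf : ContDiff ℝ (⊤ : ℕ∞) (fun p : EuclideanSpace ℝ (Fin nx) × EuclideanSpace ℝ (Fin ny) =>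
      f p.1 p.2))
    (hg : ContDiff ℝ (⊤ : ℕ∞) (fun p : EuclideanSpace ℝ (Fin nx) × EuclideanSpace ℝ (Fin ny) =>
      g p.1 p.2))
    (hγ : ContDiff ℝ (⊤ : ℕ∞) γ)
    (hmono : ∀ x y₁ y₂, (inner ℝ (y₁ - y₂) (g x y₁ - g x y₂) : ℝ) ≤ -β * ‖y₁ - y₂‖ ^ 2)
    (hγ0 : ∀ x, g x (γ x) = 0)
    (hfb : ∀ j, ∃ B, ∀ p : EuclideanSpace ℝ (Fin nx) × EuclideanSpace ℝ (Fin ny),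
      ‖iteratedFDeriv ℝ j (fun q : EuclideanSpace ℝ (Fin nx) × EuclideanSpace ℝ (Fin ny) =>
        f q.1 q.2) p‖ ≤ B)
    (hgb : ∀ j, ∃ B, ∀ p : EuclideanSpace ℝ (Fin nx) × EuclideanSpace ℝ (Fin ny),
      ‖iteratedFDeriv ℝ j (fun q : EuclideanSpace ℝ (Fin nx) × EuclideanSpace ℝ (Fin ny) =>
        g q.1 q.2) p‖ ≤ B)
    (hγb : ∀ j, ∃ B, ∀ x, ‖iteratedFDeriv ℝ j γ x‖ ≤ B)
    (hγ₁ : ∀ x, fderiv ℝ (g x) (γ x) (γ₁ x) = fderiv ℝ γ x (f x (γ x)))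
    (hΓ₁ : ∀ ε : ℝ, 0 < ε → ∀ x, g x (Γ₁ x ε) = ε • (fderiv ℝ γ x (f x (γ x)))) :
    ∃ C₁ > 0, ∃ ε₀ > 0, ∀ ε ∈ Set.Ioc (0 : ℝ) ε₀, ∀ x,
      ‖Γ₁ x ε - γ x - ε • γ₁ x‖ ≤ C₁ / β * ε ^ 2 := by
  set G : EuclideanSpace ℝ (Fin nx) × EuclideanSpace ℝ (Fin ny) → EuclideanSpace ℝ (Fin ny) :=
    fun p => g p.1 p.2 with hGdef
  have hGdiff : Differentiable ℝ G := hg.differentiable (by simp)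
  have hG' : Differentiable ℝ (fderiv ℝ G) :=
    (hg.fderiv_right (m := 1) (WithTop.coe_le_coe.mpr le_top)).differentiable (by simp)
  -- bounds
  obtain ⟨B₂, hB₂⟩ := hgb 2
  obtain ⟨Bf, hBf⟩ := hfb 0
  obtain ⟨Bγ, hBγ⟩ := hγb 1
  have hB₂0 : 0 ≤ B₂ := le_trans (norm_nonneg _) (hB₂ 0)
  have hBf' : ∀ x y, ‖f x y‖ ≤ Bf := by
    intro x y
    have := hBf (x, y)
    rwa [norm_iteratedFDeriv_zero] at this
  have hBf0 : 0 ≤ Bf := le_trans (norm_nonneg _) (hBf' 0 0)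
  have hBγ' : ∀ x, ‖fderiv ℝ γ x‖ ≤ Bγ := by
    intro x
    have := hBγ x
    rwa [← norm_iteratedFDeriv_fderiv, norm_iteratedFDeriv_zero] at this
  have hBγ0 : 0 ≤ Bγ := le_trans (norm_nonneg _) (hBγ' 0)
  -- Lipschitz bound on fderiv G
  have hLip : ∀ p q : EuclideanSpace ℝ (Fin nx) × EuclideanSpace ℝ (Fin ny), ‖fderiv ℝ G p - fderiv ℝ G q‖ ≤ B₂ * ‖p - q‖ := by
    intro p q
    refine Convex.norm_image_sub_le_of_norm_fderiv_le
      (fun z _ => hG' z)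
      (fun z _ => ?_) convex_univ (Set.mem_univ q) (Set.mem_univ p)
    have h1 : ‖fderiv ℝ (fderiv ℝ G) z‖ = ‖iteratedFDeriv ℝ 2 G z‖ := by
      rw [← norm_iteratedFDeriv_zero (𝕜 := ℝ) (f := fderiv ℝ (fderiv ℝ G)),
        norm_iteratedFDeriv_fderiv, norm_iteratedFDeriv_fderiv]
    rw [h1]
    exact hB₂ z
  -- derivative of g x in y
  have hDer : ∀ x z, HasFDerivAt (g x) ((fderiv ℝ G (x, z)).comp (auxJ nx ny)) z := by
    intro x z
    have h1 : HasFDerivAt (fun y : EuclideanSpace ℝ (Fin ny) => ((x, y) : EuclideanSpace ℝ (Fin nx) × EuclideanSpace ℝ (Fin ny))) (auxJ nx ny) z :=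
      HasFDerivAt.prodMk (hasFDerivAt_const x z) (hasFDerivAt_id z)
    exact (hGdiff (x, z)).hasFDerivAt.comp z h1
  have hfd : ∀ x z, fderiv ℝ (g x) z = (fderiv ℝ G (x, z)).comp (auxJ nx ny) :=
    fun x z => (hDer x z).fderiv
  -- bound on γ₁
  set K : ℝ := β⁻¹ * (Bγ * Bf) with hKdef
  have hK0 : 0 ≤ K := by positivity
  have hK : ∀ x, ‖γ₁ x‖ ≤ K := by
    intro x
    have h1 : ‖γ₁ x‖ ≤ β⁻¹ * ‖fderiv ℝ (g x) (γ x) (γ₁ x)‖ := by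
      have hD : HasFDerivAt (g x) (fderiv ℝ (g x) (γ x)) (γ x) := by
        rw [hfd x (γ x)]; exact hDer x (γ x)
      exact aux_mono_deriv hβ hD (hmono x) (γ₁ x)
    rw [hγ₁ x] at h1
    refine h1.trans ?_
    rw [hKdef]
    refine mul_le_mul_of_nonneg_left ?_ (by positivity)
    calc ‖fderiv ℝ γ x (f x (γ x))‖ ≤ ‖fderiv ℝ γ x‖ * ‖f x (γ x)‖ :=
        (fderiv ℝ γ x).le_opNorm _
      _ ≤ Bγ * Bf := mul_le_mul (hBγ' x) (hBf' x (γ x)) (norm_nonneg _) hBγ0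
  refine ⟨B₂ * K ^ 2 + 1, by positivity, 1, one_pos, ?_⟩
  rintro ε ⟨hε0, hε1⟩ x
  set y₀ := γ x with hy₀
  set v := ε • γ₁ x with hv
  set D := fderiv ℝ (g x) y₀ with hD
  -- Taylor estimate
  have htaylor : ‖g x (y₀ + v) - D v‖ ≤ B₂ * ‖v‖ ^ 2 := by
    have hdiffh : ∀ u, DifferentiableAt ℝ (fun z => g x z - D z) u :=
      fun u => ((hDer x u).differentiableAt).sub (D.differentiable.differentiableAt)
    have hbound : ∀ u ∈ Metric.closedBall y₀ ‖v‖,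
        ‖fderiv ℝ (fun z => g x z - D z) u‖ ≤ B₂ * ‖v‖ := by
      intro u hu
      have h1 : fderiv ℝ (fun z => g x z - D z) u = fderiv ℝ (g x) u - D := by
        rw [fderiv_fun_sub ((hDer x u).differentiableAt) (D.differentiable.differentiableAt),
          D.fderiv]
      rw [h1, hD, hfd x u, hfd x y₀, ← ContinuousLinearMap.sub_comp]
      refine aux_comp_inr_norm _ (by positivity) ?_
      calc ‖fderiv ℝ G (x, u) - fderiv ℝ G (x, y₀)‖
          ≤ B₂ * ‖((x, u) : EuclideanSpace ℝ (Fin nx) × EuclideanSpace ℝ (Fin ny)) - (x, y₀)‖ := hLip _ _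
        _ ≤ B₂ * ‖v‖ := by
            refine mul_le_mul_of_nonneg_left ?_ hB₂0
            have : ‖((x, u) : EuclideanSpace ℝ (Fin nx) × EuclideanSpace ℝ (Fin ny)) - (x, y₀)‖ = ‖u - y₀‖ := by
              simp [Prod.norm_def, Prod.sub_def]
            rw [this]
            simpa [dist_eq_norm] using hu
    have hmem1 : y₀ ∈ Metric.closedBall y₀ ‖v‖ := by
      simp [norm_nonneg]
    have hmem2 : y₀ + v ∈ Metric.closedBall y₀ ‖v‖ := by
      simp [dist_eq_norm]
    have := Convex.norm_image_sub_le_of_norm_fderiv_le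
      (fun u _ => hdiffh u) hbound (convex_closedBall y₀ ‖v‖) hmem1 hmem2
    have h2 : g x (y₀ + v) - D (y₀ + v) - (g x y₀ - D y₀) = g x (y₀ + v) - D v := by
      rw [hγ0 x]
      simp [map_add]
      abel
    rw [h2] at this
    refine this.trans ?_
    have h3 : ‖y₀ + v - y₀‖ = ‖v‖ := by rw [add_sub_cancel_left]
    rw [h3]
    exact le_of_eq (by ring)
  -- identify g x (Γ₁ x ε) with D v
  have hgΓ : g x (Γ₁ x ε) = D v := by
    rw [hΓ₁ ε hε0 x, ← hγ₁ x]
    rw [hv, hD, hy₀, map_smul]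
  have hvK : ‖v‖ ≤ ε * K := by
    rw [hv, norm_smul, Real.norm_eq_abs, abs_of_pos hε0]
    exact mul_le_mul_of_nonneg_left (hK x) hε0.le
  have h6 : ‖g x (Γ₁ x ε) - g x (y₀ + v)‖ ≤ B₂ * K ^ 2 * ε ^ 2 := by
    rw [hgΓ, norm_sub_rev]
    refine htaylor.trans ?_
    have : ‖v‖ ^ 2 ≤ (ε * K) ^ 2 := by
      exact pow_le_pow_left₀ (norm_nonneg _) hvK 2
    nlinarith
  have h7 : ‖Γ₁ x ε - (y₀ + v)‖ ≤ β⁻¹ * ‖g x (Γ₁ x ε) - g x (y₀ + v)‖ :=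
    aux_mono_dist hβ (hmono x (Γ₁ x ε) (y₀ + v))
  have h8 : Γ₁ x ε - γ x - ε • γ₁ x = Γ₁ x ε - (y₀ + v) := by
    rw [hy₀, hv]; abel
  rw [h8]
  calc ‖Γ₁ x ε - (y₀ + v)‖ ≤ β⁻¹ * (B₂ * K ^ 2 * ε ^ 2) :=
      h7.trans (mul_le_mul_of_nonneg_left h6 (by positivity))
    _ = B₂ * K ^ 2 / β * ε ^ 2 := by rw [div_eq_mul_inv]; ring
    _ ≤ (B₂ * K ^ 2 + 1) / β * ε ^ 2 := by
        have h9 : B₂ * K ^ 2 / β ≤ (B₂ * K ^ 2 + 1) / β := by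
          gcongr
          linarith
        exact mul_le_mul_of_nonneg_right h9 (by positivity)
end

section
/- Let X_k solve the reduced equation dX_k/dt = f(X_k, Γ_k(X_k, ε)) and (x,y) solve the full slow-fast system. Suppose the fast error satisfies |z_k(t)|² ≤ C(ε^{2k+2} + e^{−βt/ε}|z_k(0)|²) where z_k = y − Γ_k(x,ε), and that ∇_x f, ∇_y f and ∇_x Γ_k are bounded. Then there exists C_k > 0 such that |x(t) − X_k(t)|² ≤ e^{C_k t}|x(0) − X_k(0)|² + ε^{2k+2}(e^{C_k t} − 1) + C_k ((e^{C_k t} − e^{−βt/ε})/(β/ε + C_k)) |z_k(0)|² for all t ≥ 0. -/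
open RealInnerProductSpace

set_option maxHeartbeats 1000000 in
/-- Closeness of the slow variable to the reduced dynamics: if the fast error
satisfies `|z_k(t)|² ≤ C(ε^{2k+2} + e^{-βt/ε}|z_k(0)|²)` and `∇f`, `∇Γ_k` are bounded,
then `|x(t) - X_k(t)|²` obeys the stated Gronwall bound. -/
theorem stmt_17 (nx ny k : ℕ) (β ε : ℝ) (hβ : 0 < β) (hε : 0 < ε)
    (f : EuclideanSpace ℝ (Fin nx) → EuclideanSpace ℝ (Fin ny) → EuclideanSpace ℝ (Fin nx))
    (g : EuclideanSpace ℝ (Fin nx) → EuclideanSpace ℝ (Fin ny) → EuclideanSpace ℝ (Fin ny))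
    (Γk : EuclideanSpace ℝ (Fin nx) → EuclideanSpace ℝ (Fin ny))
    (hf : ContDiff ℝ (⊤ : ℕ∞) (fun p : EuclideanSpace ℝ (Fin nx) × EuclideanSpace ℝ (Fin ny) =>
      f p.1 p.2))
    (hΓs : ContDiff ℝ (⊤ : ℕ∞) Γk)
    -- ∇_x f and ∇_y f bounded (gradient of f bounded), ∇_x Γ_k bounded
    (hfb : ∃ B, ∀ p : EuclideanSpace ℝ (Fin nx) × EuclideanSpace ℝ (Fin ny),
      ‖fderiv ℝ (fun q : EuclideanSpace ℝ (Fin nx) × EuclideanSpace ℝ (Fin ny) =>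
        f q.1 q.2) p‖ ≤ B)
    (hΓb : ∃ B, ∀ x, ‖fderiv ℝ Γk x‖ ≤ B)
    (x : ℝ → EuclideanSpace ℝ (Fin nx)) (y : ℝ → EuclideanSpace ℝ (Fin ny))
    (Xk : ℝ → EuclideanSpace ℝ (Fin nx))
    -- (x,y) solves the full system, X_k solves the reduced equation
    (hx : ∀ t, HasDerivAt x (f (x t) (y t)) t)
    (hy : ∀ t, HasDerivAt y (ε⁻¹ • g (x t) (y t)) t)
    (hX : ∀ t, HasDerivAt Xk (f (Xk t) (Γk (Xk t))) t)
    -- fast-error bound hypothesis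
    (C : ℝ) (hC : 0 < C)
    (hz : ∀ t ≥ (0 : ℝ), ‖y t - Γk (x t)‖ ^ 2 ≤
      C * (ε ^ (2 * k + 2) + Real.exp (-(β * t) / ε) * ‖y 0 - Γk (x 0)‖ ^ 2)) :
    ∃ Ck > 0, ∀ t ≥ (0 : ℝ),
      ‖x t - Xk t‖ ^ 2 ≤
        Real.exp (Ck * t) * ‖x 0 - Xk 0‖ ^ 2
          + ε ^ (2 * k + 2) * (Real.exp (Ck * t) - 1)
          + Ck * ((Real.exp (Ck * t) - Real.exp (-(β * t) / ε)) / (β / ε + Ck))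
            * ‖y 0 - Γk (x 0)‖ ^ 2 := by
  obtain ⟨B, hB⟩ := hfb
  obtain ⟨L, hL⟩ := hΓb
  have hB0 : 0 ≤ B := le_trans (norm_nonneg _) (hB (0, 0))
  have hL0 : 0 ≤ L := le_trans (norm_nonneg _) (hL 0)
  set Ck : ℝ := 3 * (B + 1) * (L + 1) * (C + 1) with hCkdef
  have hCk : 0 < Ck := by positivity
  refine ⟨Ck, hCk, ?_⟩
  set A : ℝ := ε ^ (2 * k + 2) with hAdef
  have hA0 : 0 ≤ A := by rw [hAdef]; positivity
  set Z0 : ℝ := ‖y 0 - Γk (x 0)‖ ^ 2 with hZ0def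
  have hZ00 : 0 ≤ Z0 := by rw [hZ0def]; positivity
  set u0 : ℝ := ‖x 0 - Xk 0‖ ^ 2 with hu0def
  have hγ : 0 < β / ε + Ck := by positivity
  -- Lipschitz bounds
  have hfd : Differentiable ℝ (fun p : EuclideanSpace ℝ (Fin nx) × EuclideanSpace ℝ (Fin ny) =>
      f p.1 p.2) := hf.differentiable (by simp)
  have hΓd : Differentiable ℝ Γk := hΓs.differentiable (by simp)
  have hlipf : ∀ a b : EuclideanSpace ℝ (Fin nx) × EuclideanSpace ℝ (Fin ny),
      ‖f a.1 a.2 - f b.1 b.2‖ ≤ B * ‖a - b‖ := fun a b =>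
    Convex.norm_image_sub_le_of_norm_fderiv_le (fun p _ => hfd p)
      (fun p _ => hB p) convex_univ (Set.mem_univ b) (Set.mem_univ a)
  have hlipΓ : ∀ a b : EuclideanSpace ℝ (Fin nx), ‖Γk a - Γk b‖ ≤ L * ‖a - b‖ := fun a b =>
    Convex.norm_image_sub_le_of_norm_fderiv_le (fun p _ => hΓd p)
      (fun p _ => hL p) convex_univ (Set.mem_univ b) (Set.mem_univ a)
  -- the functions
  set u : ℝ → ℝ := fun t => ‖x t - Xk t‖ ^ 2 with hudef
  set F : ℝ → ℝ := fun t => Real.exp (-(β * t) / ε) with hFdef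
  set E : ℝ → ℝ := fun t => Real.exp (Ck * t) with hEdef
  set v : ℝ → ℝ := fun t => E t * u0 + A * (E t - 1) + Ck * ((E t - F t) / (β / ε + Ck)) * Z0
    with hvdef
  set u' : ℝ → ℝ := fun t =>
    ⟪x t - Xk t, f (x t) (y t) - f (Xk t) (Γk (Xk t))⟫ +
      ⟪f (x t) (y t) - f (Xk t) (Γk (Xk t)), x t - Xk t⟫ with hu'def
  have hu : ∀ t, HasDerivAt u (u' t) t := by
    intro t
    have h1 : HasDerivAt (fun s => x s - Xk s) (f (x t) (y t) - f (Xk t) (Γk (Xk t))) t :=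
      (hx t).sub (hX t)
    have h2 := h1.inner ℝ h1
    simp only [real_inner_self_eq_norm_sq] at h2
    exact h2
  set v' : ℝ → ℝ := fun t =>
    Real.exp (Ck * t) * Ck * u0 + A * (Real.exp (Ck * t) * Ck) +
      Ck * ((Real.exp (Ck * t) * Ck - Real.exp (-(β * t) / ε) * (-(β / ε))) / (β / ε + Ck)) * Z0
    with hv'def
  have hE' : ∀ t, HasDerivAt E (Real.exp (Ck * t) * Ck) t := by
    intro t
    have h1 : HasDerivAt (fun s : ℝ => Ck * s) Ck t := by
      simpa using (hasDerivAt_id t).const_mul Ck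
    exact h1.exp
  have hF' : ∀ t, HasDerivAt F (Real.exp (-(β * t) / ε) * (-(β / ε))) t := by
    intro t
    have h1 : HasDerivAt (fun s : ℝ => -(β * s) / ε) (-(β / ε)) t := by
      have := (((hasDerivAt_id t).const_mul β).neg).div_const ε
      simpa [neg_div] using this
    exact h1.exp
  have hv : ∀ t, HasDerivAt v (v' t) t := by
    intro t
    exact ((hE' t).mul_const u0).add (((hE' t).sub_const 1).const_mul A) |>.add
      (((((hE' t).sub (hF' t)).div_const (β / ε + Ck)).const_mul Ck).mul_const Z0)
  -- identity for v
  have hvid : ∀ t, v' t = Ck * v t + Ck * A + Ck * F t * Z0 := by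
    intro t
    simp only [hv'def, hvdef, hEdef, hFdef]
    field_simp
    ring
  -- key differential inequality
  have hkey : ∀ t ≥ (0 : ℝ), u' t ≤ Ck * u t + Ck * A + Ck * F t * Z0 := by
    intro t ht
    simp only [hu'def, hudef, hFdef]
    have hw0 : (0 : ℝ) ≤ ‖x t - Xk t‖ := norm_nonneg _
    have hzn0 : (0 : ℝ) ≤ ‖y t - Γk (x t)‖ := norm_nonneg _
    have h1 : ⟪f (x t) (y t) - f (Xk t) (Γk (Xk t)), x t - Xk t⟫ ≤
        ‖f (x t) (y t) - f (Xk t) (Γk (Xk t))‖ * ‖x t - Xk t‖ := real_inner_le_norm _ _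
    have h2 : ‖f (x t) (y t) - f (Xk t) (Γk (Xk t))‖ ≤
        B * ‖((x t, y t) : EuclideanSpace ℝ (Fin nx) × EuclideanSpace ℝ (Fin ny)) -
          (Xk t, Γk (Xk t))‖ := hlipf (x t, y t) (Xk t, Γk (Xk t))
    have h3 : ‖((x t, y t) : EuclideanSpace ℝ (Fin nx) × EuclideanSpace ℝ (Fin ny)) -
        (Xk t, Γk (Xk t))‖ ≤ ‖x t - Xk t‖ + ‖y t - Γk (Xk t)‖ := by
      rw [Prod.norm_def]
      exact max_le (le_add_of_nonneg_right (norm_nonneg _))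
        (le_add_of_nonneg_left (norm_nonneg _))
    have h4 : ‖y t - Γk (Xk t)‖ ≤ ‖y t - Γk (x t)‖ + L * ‖x t - Xk t‖ := by
      calc ‖y t - Γk (Xk t)‖ = ‖(y t - Γk (x t)) + (Γk (x t) - Γk (Xk t))‖ := by abel_nf
        _ ≤ ‖y t - Γk (x t)‖ + ‖Γk (x t) - Γk (Xk t)‖ := norm_add_le _ _
        _ ≤ ‖y t - Γk (x t)‖ + L * ‖x t - Xk t‖ := by
            have := hlipΓ (x t) (Xk t); linarith
    have h5 : ‖f (x t) (y t) - f (Xk t) (Γk (Xk t))‖ ≤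
        B * ((1 + L) * ‖x t - Xk t‖ + ‖y t - Γk (x t)‖) := by
      refine h2.trans ?_
      have h34 : ‖((x t, y t) : EuclideanSpace ℝ (Fin nx) × EuclideanSpace ℝ (Fin ny)) -
          (Xk t, Γk (Xk t))‖ ≤ (1 + L) * ‖x t - Xk t‖ + ‖y t - Γk (x t)‖ := by linarith
      exact mul_le_mul_of_nonneg_left h34 hB0
    have hzt := hz t ht
    have hF0 : (0 : ℝ) ≤ Real.exp (-(β * t) / ε) := (Real.exp_pos _).le
    have hCk1 : 3 * B * (L + 1) ≤ Ck := by
      rw [hCkdef]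
      nlinarith [mul_nonneg hB0 hL0, mul_nonneg (mul_nonneg hB0 hL0) hC.le,
        mul_nonneg hB0 hC.le, mul_nonneg hL0 hC.le]
    have hCk2 : B * C ≤ Ck := by
      rw [hCkdef]
      nlinarith [mul_nonneg hB0 hL0, mul_nonneg (mul_nonneg hB0 hL0) hC.le,
        mul_nonneg hB0 hC.le, mul_nonneg hL0 hC.le]
    have hc := real_inner_comm (x t - Xk t) (f (x t) (y t) - f (Xk t) (Γk (Xk t)))
    have h6 : ⟪x t - Xk t, f (x t) (y t) - f (Xk t) (Γk (Xk t))⟫ +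
        ⟪f (x t) (y t) - f (Xk t) (Γk (Xk t)), x t - Xk t⟫ ≤
        2 * (B * ((1 + L) * ‖x t - Xk t‖ + ‖y t - Γk (x t)‖)) * ‖x t - Xk t‖ := by
      have h5w := mul_le_mul_of_nonneg_right h5 hw0
      linarith
    have h7 : 2 * (B * ((1 + L) * ‖x t - Xk t‖ + ‖y t - Γk (x t)‖)) * ‖x t - Xk t‖ ≤
        3 * B * (L + 1) * ‖x t - Xk t‖ ^ 2 + B * ‖y t - Γk (x t)‖ ^ 2 := by
      nlinarith [mul_nonneg hB0 (sq_nonneg (‖y t - Γk (x t)‖ - ‖x t - Xk t‖)),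
        mul_nonneg (mul_nonneg hB0 hL0) (sq_nonneg ‖x t - Xk t‖)]
    have h8 : B * ‖y t - Γk (x t)‖ ^ 2 ≤
        B * C * A + B * C * (Real.exp (-(β * t) / ε) * Z0) := by
      have hmul := mul_le_mul_of_nonneg_left hzt hB0
      nlinarith [hmul]
    have h9 : 3 * B * (L + 1) * ‖x t - Xk t‖ ^ 2 ≤ Ck * ‖x t - Xk t‖ ^ 2 :=
      mul_le_mul_of_nonneg_right hCk1 (sq_nonneg _)
    have h10 : B * C * A ≤ Ck * A := mul_le_mul_of_nonneg_right hCk2 hA0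
    have h11 : B * C * (Real.exp (-(β * t) / ε) * Z0) ≤ Ck * (Real.exp (-(β * t) / ε) * Z0) :=
      mul_le_mul_of_nonneg_right hCk2 (mul_nonneg hF0 hZ00)
    nlinarith [h6, h7, h8, h9, h10, h11]
  -- Gronwall via monotonicity
  set h : ℝ → ℝ := fun t => Real.exp (-Ck * t) * (u t - v t) with hhdef
  set h' : ℝ → ℝ := fun t =>
    Real.exp (-Ck * t) * (-Ck) * (u t - v t) + Real.exp (-Ck * t) * (u' t - v' t) with hh'def
  have hh : ∀ t, HasDerivAt h (h' t) t := by
    intro t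
    have he : HasDerivAt (fun s => Real.exp (-Ck * s)) (Real.exp (-Ck * t) * (-Ck)) t := by
      have h1 : HasDerivAt (fun s : ℝ => -Ck * s) (-Ck) t := by
        simpa using (hasDerivAt_id t).const_mul (-Ck)
      exact h1.exp
    exact he.mul ((hu t).sub (hv t))
  have hdiff : Differentiable ℝ h := fun t => (hh t).differentiableAt
  have hmono : AntitoneOn h (Set.Ici 0) := by
    refine antitoneOn_of_deriv_nonpos (convex_Ici 0) hdiff.continuous.continuousOn
      (fun s _ => (hdiff s).differentiableWithinAt) (fun s hs => ?_)
    rw [(hh s).deriv]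
    rw [interior_Ici] at hs
    have hs0 : (0 : ℝ) ≤ s := le_of_lt hs
    have hk := hkey s hs0
    have heq : h' s = Real.exp (-Ck * s) * (u' s - (Ck * u s + Ck * A + Ck * F s * Z0)) := by
      simp only [hh'def]
      rw [hvid s]; ring
    rw [heq]
    apply mul_nonpos_of_nonneg_of_nonpos (Real.exp_pos _).le
    linarith
  intro t ht
  have hle := hmono Set.self_mem_Ici ht ht
  have hv0 : v 0 = u 0 := by
    simp [hvdef, hEdef, hFdef, hudef, hu0def]
  have hh0 : h 0 = 0 := by simp [hhdef, hv0]
  rw [hh0] at hle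
  simp only [hhdef] at hle
  have hexp : (0 : ℝ) < Real.exp (-Ck * t) := Real.exp_pos _
  have hut : u t ≤ v t := by
    by_contra hcon
    push_neg at hcon
    have : 0 < Real.exp (-Ck * t) * (u t - v t) := mul_pos hexp (by linarith)
    linarith
  exact hut
end
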